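/- arXiv:1202.0875 — 8 statements merged into one kernel-verified Lean document; each statement's English description precedes it below -/
import Mathlib

section
/- Let D > 0 and let s, t : ℝ → ℝ be continuously differentiable on [0,1] with t(u) ∈ [0, D/2] for all u ∈ [0,1] and t(0) = t(1) = 0. If |s(1) − s(0)| ≤ D, then the hemispherical warped length satisfies ∫₀¹ √( t′(u)² + cos(π·t(u)/D)² · s′(u)² ) du ≥ |s(1) − s(0)|. (In other words, in the hemispherical suspension the equatorial segments of length at most D are length-minimizing: no curve leaving the equator into the hemisphere and returning can be shorter.) -/
open Real Set intervalIntegral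

private lemma calib_bound (a sp cp sq cq T S : ℝ) (ha0 : 0 ≤ a) (ha1 : a < 1)
    (hp : sp ^ 2 + cp ^ 2 = 1) (hq : sq ^ 2 + cq ^ 2 = 1) :
    a * (-sp * sq * T + cq * (cp * S)) / Real.sqrt (1 - (a * (cp * sq)) ^ 2) ≤
      Real.sqrt (T ^ 2 + cp ^ 2 * S ^ 2) := by
  have ha2 : a ^ 2 < 1 := by nlinarith
  have hX : (cp * sq) ^ 2 ≤ 1 := by
    nlinarith [sq_nonneg sp, sq_nonneg cq, sq_nonneg (sp * cq), sq_nonneg (cp * sq)]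
  have hpos : 0 < 1 - (a * (cp * sq)) ^ 2 := by nlinarith [sq_nonneg (cp * sq)]
  have hden : 0 < Real.sqrt (1 - (a * (cp * sq)) ^ 2) := Real.sqrt_pos.2 hpos
  set N : ℝ := -sp * sq * T + cq * (cp * S) with hN
  have hcs : N ^ 2 ≤ (sp ^ 2 * sq ^ 2 + cq ^ 2) * (T ^ 2 + cp ^ 2 * S ^ 2) := by
    rw [hN]
    nlinarith [sq_nonneg (sp * sq * (cp * S) + cq * T)]
  have hW : sp ^ 2 * sq ^ 2 + cq ^ 2 = 1 - (cp * sq) ^ 2 := by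
    linear_combination sq ^ 2 * hp + hq
  have h1 : a ^ 2 * (1 - (cp * sq) ^ 2) ≤ 1 - (a * (cp * sq)) ^ 2 := by nlinarith
  have hkey : (a * N) ^ 2 ≤ (1 - (a * (cp * sq)) ^ 2) * (T ^ 2 + cp ^ 2 * S ^ 2) := by
    calc (a * N) ^ 2 = a ^ 2 * N ^ 2 := by ring
      _ ≤ a ^ 2 * ((1 - (cp * sq) ^ 2) * (T ^ 2 + cp ^ 2 * S ^ 2)) := by
          rw [← hW]; exact mul_le_mul_of_nonneg_left hcs (by positivity)
      _ = (a ^ 2 * (1 - (cp * sq) ^ 2)) * (T ^ 2 + cp ^ 2 * S ^ 2) := by ring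
      _ ≤ (1 - (a * (cp * sq)) ^ 2) * (T ^ 2 + cp ^ 2 * S ^ 2) :=
          mul_le_mul_of_nonneg_right h1 (by positivity)
  have haN : a * N ≤ Real.sqrt (1 - (a * (cp * sq)) ^ 2)
      * Real.sqrt (T ^ 2 + cp ^ 2 * S ^ 2) := by
    calc a * N ≤ |a * N| := le_abs_self _
      _ = Real.sqrt ((a * N) ^ 2) := (Real.sqrt_sq_eq_abs _).symm
      _ ≤ Real.sqrt ((1 - (a * (cp * sq)) ^ 2) * (T ^ 2 + cp ^ 2 * S ^ 2)) :=
          Real.sqrt_le_sqrt hkey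
      _ = _ := Real.sqrt_mul hpos.le _
  rw [div_le_iff₀ hden]
  calc a * N ≤ _ := haN
    _ = Real.sqrt (T ^ 2 + cp ^ 2 * S ^ 2) * Real.sqrt (1 - (a * (cp * sq)) ^ 2) := by ring

private lemma hemi_aux
    (D : ℝ) (hD : 0 < D) (s t s' t' : ℝ → ℝ)
    (hs : ∀ u ∈ Icc (0:ℝ) 1, HasDerivWithinAt s (s' u) (Icc (0:ℝ) 1) u)
    (ht : ∀ u ∈ Icc (0:ℝ) 1, HasDerivWithinAt t (t' u) (Icc (0:ℝ) 1) u)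
    (hs' : ContinuousOn s' (Icc (0:ℝ) 1))
    (ht' : ContinuousOn t' (Icc (0:ℝ) 1))
    (ht0 : t 0 = 0) (ht1 : t 1 = 0)
    (hL : 0 ≤ s 1 - s 0) (hd : s 1 - s 0 ≤ D) :
    s 1 - s 0 ≤
      ∫ u in (0:ℝ)..1,
        Real.sqrt ((t' u) ^ 2 + (Real.cos (π * t u / D)) ^ 2 * (s' u) ^ 2) := by
  have hπ : (0:ℝ) < π := Real.pi_pos
  set L : ℝ := s 1 - s 0 with hLdef
  set c : ℝ := (s 0 + s 1) / 2 with hc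
  set x : ℝ := π * L / (2 * D) with hx
  have hx0 : 0 ≤ x := by
    apply div_nonneg (by positivity) (by positivity)
  have hxpi : x ≤ π / 2 := by
    rw [hx, div_le_div_iff₀ (by positivity) (by norm_num)]
    nlinarith
  -- continuity of s and t on [0,1]
  have hscont : ContinuousOn s (Icc (0:ℝ) 1) := fun u hu => (hs u hu).continuousWithinAt
  have htcont : ContinuousOn t (Icc (0:ℝ) 1) := fun u hu => (ht u hu).continuousWithinAt
  -- integrand continuity / integrability
  have hIcont : ContinuousOn
      (fun u => Real.sqrt ((t' u) ^ 2 + (Real.cos (π * t u / D)) ^ 2 * (s' u) ^ 2))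
      (Icc (0:ℝ) 1) := by
    apply Real.continuous_sqrt.comp_continuousOn
    exact (ht'.pow 2).add
      (((Real.continuous_cos.comp_continuousOn
        ((htcont.const_smul π).div_const D)).pow 2).mul (hs'.pow 2))
  have hIint : IntervalIntegrable
      (fun u => Real.sqrt ((t' u) ^ 2 + (Real.cos (π * t u / D)) ^ 2 * (s' u) ^ 2))
      MeasureTheory.volume 0 1 := by
    apply ContinuousOn.intervalIntegrable
    rwa [uIcc_of_le zero_le_one]
  -- Main step: for every a ∈ (0,1), the calibration bound
  have key : ∀ a : ℝ, a ∈ Ioo (0:ℝ) 1 →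
      2 * D / π * Real.arcsin (a * Real.sin x) ≤
      ∫ u in (0:ℝ)..1,
        Real.sqrt ((t' u) ^ 2 + (Real.cos (π * t u / D)) ^ 2 * (s' u) ^ 2) := by
    intro a ha
    obtain ⟨ha0, ha1⟩ := ha
    set g : ℝ → ℝ := fun u => a * (Real.cos (π * t u / D) * Real.sin (π * (s u - c) / D))
      with hgdef
    set g' : ℝ → ℝ := fun u =>
      a * ((-Real.sin (π * t u / D) * (π * t' u / D)) * Real.sin (π * (s u - c) / D)
        + Real.cos (π * t u / D) * (Real.cos (π * (s u - c) / D) * (π * s' u / D)))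
      with hg'def
    set G : ℝ → ℝ := fun u => (D / π) * Real.arcsin (g u) with hGdef
    set G' : ℝ → ℝ := fun u => (D / π) * ((1 / Real.sqrt (1 - g u ^ 2)) * g' u) with hG'def
    have hgabs : ∀ u, |g u| ≤ a := by
      intro u
      rw [hgdef]
      simp only [abs_mul, abs_of_pos ha0]
      calc a * (|Real.cos (π * t u / D)| * |Real.sin (π * (s u - c) / D)|)
          ≤ a * 1 := by
            apply mul_le_mul_of_nonneg_left _ ha0.le
            exact mul_le_one₀ (Real.abs_cos_le_one _) (abs_nonneg _) (Real.abs_sin_le_one _)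
        _ = a := mul_one a
    have hgne1 : ∀ u, g u ≠ 1 := by
      intro u h
      have := hgabs u; rw [h] at this; simp at this; linarith
    have hgnem1 : ∀ u, g u ≠ -1 := by
      intro u h
      have := hgabs u; rw [h] at this; simp at this; linarith
    have hgsq : ∀ u, g u ^ 2 < 1 := by
      intro u
      have h1 := hgabs u
      have := abs_nonneg (g u)
      nlinarith [sq_abs (g u)]
    have hden : ∀ u, 0 < Real.sqrt (1 - g u ^ 2) := by
      intro u
      apply Real.sqrt_pos.2
      linarith [hgsq u]
    -- derivative of g
    have hderg : ∀ u ∈ Icc (0:ℝ) 1, HasDerivWithinAt g (g' u) (Icc (0:ℝ) 1) u := by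
      intro u hu
      have h1 : HasDerivWithinAt (fun u => π * t u / D) (π * t' u / D) (Icc (0:ℝ) 1) u :=
        (((ht u hu).const_mul π).div_const D)
      have h2 : HasDerivWithinAt (fun u => π * (s u - c) / D) (π * s' u / D) (Icc (0:ℝ) 1) u := by
        have := (((hs u hu).sub_const c).const_mul π).div_const D
        simpa using this
      have hcos : HasDerivWithinAt (fun u => Real.cos (π * t u / D))
          (-Real.sin (π * t u / D) * (π * t' u / D)) (Icc (0:ℝ) 1) u :=
        (Real.hasDerivAt_cos _).comp_hasDerivWithinAt u h1
      have hsin : HasDerivWithinAt (fun u => Real.sin (π * (s u - c) / D))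
          (Real.cos (π * (s u - c) / D) * (π * s' u / D)) (Icc (0:ℝ) 1) u :=
        (Real.hasDerivAt_sin _).comp_hasDerivWithinAt u h2
      exact (hcos.mul hsin).const_mul a
    -- derivative of G
    have hderG : ∀ u ∈ Icc (0:ℝ) 1, HasDerivWithinAt G (G' u) (Icc (0:ℝ) 1) u := by
      intro u hu
      exact ((Real.hasDerivAt_arcsin (hgnem1 u) (hgne1 u)).comp_hasDerivWithinAt
        u (hderg u hu)).const_mul (D / π)
    -- pointwise bound G' ≤ integrand
    have hbound : ∀ u, G' u ≤
        Real.sqrt ((t' u) ^ 2 + (Real.cos (π * t u / D)) ^ 2 * (s' u) ^ 2) := by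
      intro u
      have hg'N : g' u = π / D *
          (a * (-Real.sin (π * t u / D) * Real.sin (π * (s u - c) / D) * t' u
            + Real.cos (π * (s u - c) / D) * (Real.cos (π * t u / D) * s' u))) := by
        rw [hg'def]; ring
      have hgu : (1:ℝ) - g u ^ 2
          = 1 - (a * (Real.cos (π * t u / D) * Real.sin (π * (s u - c) / D))) ^ 2 := rfl
      have hd0 : Real.sqrt (1 - g u ^ 2) ≠ 0 := (hden u).ne'
      have hG'eq : G' u = a * (-Real.sin (π * t u / D) * Real.sin (π * (s u - c) / D) * t' u
            + Real.cos (π * (s u - c) / D) * (Real.cos (π * t u / D) * s' u))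
          / Real.sqrt (1 - g u ^ 2) := by
        rw [hG'def]
        simp only
        rw [hg'N]
        field_simp
      rw [hG'eq, hgu]
      exact calib_bound a (Real.sin (π * t u / D)) (Real.cos (π * t u / D))
        (Real.sin (π * (s u - c) / D)) (Real.cos (π * (s u - c) / D)) (t' u) (s' u)
        ha0.le ha1 (Real.sin_sq_add_cos_sq _) (Real.sin_sq_add_cos_sq _)
    -- continuity of G'
    have hgcont : ContinuousOn g (Icc (0:ℝ) 1) :=
      fun u hu => (hderg u hu).continuousWithinAt
    have hG'cont : ContinuousOn G' (Icc (0:ℝ) 1) := by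
      rw [hG'def]
      have hg'cont : ContinuousOn g' (Icc (0:ℝ) 1) := by
        rw [hg'def]
        apply ContinuousOn.mul continuousOn_const
        apply ContinuousOn.add
        · exact (((Real.continuous_sin.comp_continuousOn
            ((htcont.const_smul π).div_const D)).neg).mul
            ((ht'.const_smul π).div_const D)).mul
            (Real.continuous_sin.comp_continuousOn
              (((hscont.sub continuousOn_const).const_smul π).div_const D))
        · exact (Real.continuous_cos.comp_continuousOn
            ((htcont.const_smul π).div_const D)).mul
            ((Real.continuous_cos.comp_continuousOn
              (((hscont.sub continuousOn_const).const_smul π).div_const D)).mul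
              ((hs'.const_smul π).div_const D))
      apply ContinuousOn.mul continuousOn_const
      apply ContinuousOn.mul _ hg'cont
      apply ContinuousOn.div continuousOn_const
      · exact Real.continuous_sqrt.comp_continuousOn
          (continuousOn_const.sub (hgcont.pow 2))
      · exact fun u _ => (hden u).ne'
    have hG'int : IntervalIntegrable G' MeasureTheory.volume 0 1 := by
      apply ContinuousOn.intervalIntegrable
      rwa [uIcc_of_le zero_le_one]
    -- FTC
    have hGcont : ContinuousOn G (Icc (0:ℝ) 1) :=
      fun u hu => (hderG u hu).continuousWithinAt
    have hFTC : ∫ u in (0:ℝ)..1, G' u = G 1 - G 0 := by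
      apply intervalIntegral.integral_eq_sub_of_hasDeriv_right_of_le zero_le_one hGcont
        _ hG'int
      intro u hu
      exact (((hderG u (Ioo_subset_Icc_self hu)).hasDerivAt
        (Icc_mem_nhds hu.1 hu.2)).hasDerivWithinAt)
    -- endpoint values
    have hG1 : G 1 = (D / π) * Real.arcsin (a * Real.sin x) := by
      rw [hGdef]
      simp only
      congr 2
      rw [hgdef]
      simp only [ht1]
      rw [hx, hc, hLdef]
      have h1 : π * (0:ℝ) / D = 0 := by ring
      rw [h1, Real.cos_zero]
      have h2 : π * (s 1 - (s 0 + s 1) / 2) / D = π * (s 1 - s 0) / (2 * D) := by ring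
      rw [h2]; ring
    have hG0 : G 0 = -((D / π) * Real.arcsin (a * Real.sin x)) := by
      rw [hGdef]
      simp only
      rw [hgdef]
      simp only [ht0]
      have h1 : π * (0:ℝ) / D = 0 := by ring
      rw [h1, Real.cos_zero]
      have h2 : π * (s 0 - c) / D = -(π * L / (2 * D)) := by rw [hc, hLdef]; ring
      rw [h2, ← hx, Real.sin_neg]
      have h3 : a * (1 * -Real.sin x) = -(a * Real.sin x) := by ring
      rw [h3, Real.arcsin_neg]
      ring
    have hmono : ∫ u in (0:ℝ)..1, G' u ≤
        ∫ u in (0:ℝ)..1,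
          Real.sqrt ((t' u) ^ 2 + (Real.cos (π * t u / D)) ^ 2 * (s' u) ^ 2) := by
      apply intervalIntegral.integral_mono_on zero_le_one hG'int hIint
      intro u _
      exact hbound u
    calc 2 * D / π * Real.arcsin (a * Real.sin x)
        = G 1 - G 0 := by rw [hG1, hG0]; ring
      _ = ∫ u in (0:ℝ)..1, G' u := hFTC.symm
      _ ≤ _ := hmono
  -- limit a → 1⁻
  have hlim : Filter.Tendsto (fun a : ℝ => 2 * D / π * Real.arcsin (a * Real.sin x))
      (nhdsWithin 1 (Iio 1)) (nhds (2 * D / π * Real.arcsin (Real.sin x))) := by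
    have hcont : Continuous (fun a : ℝ => 2 * D / π * Real.arcsin (a * Real.sin x)) :=
      continuous_const.mul (Real.continuous_arcsin.comp (continuous_id.mul continuous_const))
    have := hcont.tendsto 1
    simp only [one_mul] at this
    exact this.mono_left nhdsWithin_le_nhds
  have harc : Real.arcsin (Real.sin x) = x :=
    Real.arcsin_sin (by linarith) hxpi
  have hLx : 2 * D / π * x = L := by
    rw [hx]; field_simp
  rw [harc, hLx] at hlim
  apply le_of_tendsto hlim
  filter_upwards [Ioo_mem_nhdsLT_of_mem (by norm_num : (1:ℝ) ∈ Ioc (0:ℝ) 1)] with a ha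
  exact key a ha

/-- The hemispherical warped length bound along the equator: for `D > 0` and a `C¹`
curve `u ↦ (s u, t u)` in the strip `ℝ × [0, D/2]` that starts and ends on the
equator `t = 0`, with `|s 1 - s 0| ≤ D`, the warped length
`∫₀¹ √(t'(u)² + cos(π t(u)/D)² s'(u)²) du` is at least `|s 1 - s 0|`. -/
theorem hemispherical_equator_minimizing
    (D : ℝ) (hD : 0 < D) (s t s' t' : ℝ → ℝ)
    (hs : ∀ u ∈ Icc (0:ℝ) 1, HasDerivWithinAt s (s' u) (Icc (0:ℝ) 1) u)
    (ht : ∀ u ∈ Icc (0:ℝ) 1, HasDerivWithinAt t (t' u) (Icc (0:ℝ) 1) u)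
    (hs' : ContinuousOn s' (Icc (0:ℝ) 1))
    (ht' : ContinuousOn t' (Icc (0:ℝ) 1))
    (htrange : ∀ u ∈ Icc (0:ℝ) 1, t u ∈ Icc (0:ℝ) (D / 2))
    (ht0 : t 0 = 0) (ht1 : t 1 = 0)
    (hd : |s 1 - s 0| ≤ D) :
    |s 1 - s 0| ≤
      ∫ u in (0:ℝ)..1,
        Real.sqrt ((t' u) ^ 2 + (Real.cos (π * t u / D)) ^ 2 * (s' u) ^ 2) := by
  rcases le_or_gt (s 0) (s 1) with h | h
  · rw [abs_of_nonneg (by linarith)]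
    apply hemi_aux D hD s t s' t' hs ht hs' ht' ht0 ht1 (by linarith)
    rwa [abs_of_nonneg (by linarith)] at hd
  · rw [abs_of_neg (by linarith)]
    have := hemi_aux D hD (fun u => -s u) t (fun u => -s' u) t'
      (fun u hu => (hs u hu).neg) ht (hs'.neg) ht' ht0 ht1
      (by simp; linarith)
      (by rw [abs_of_neg (by linarith)] at hd; linarith)
    simp only [neg_sq] at this
    calc -(s 1 - s 0) = (fun u => -s u) 1 - (fun u => -s u) 0 := by simp; ring
      _ ≤ _ := this
end

section
/- Let D > 0 and let s, t : ℝ → ℝ be continuously differentiable on [0,1] with t(u) ∈ [0, D/2] for all u ∈ [0,1], t(0) = 0 and t(1) = T (so T ∈ [0, D/2]). If d := |s(1) − s(0)| ≤ D, then the hemispherical warped length satisfies ∫₀¹ √( t′(u)² + cos(π·t(u)/D)² · s′(u)² ) du ≥ (D/π) · arccos( cos(π d / D) · cos(π T / D) ). (This is the rescaled spherical law of cosines lower bound: the warped length of a curve from an equator point to a point at height T above another equator point is at least the spherical distance between its endpoints.) -/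
open Real Set intervalIntegral


lemma cs_aux (A B e ca sa cb sb : ℝ) (ha : sa^2 + ca^2 = 1) (hbb : sb^2 + cb^2 = 1)
    (he : e^2 ≤ 1) :
    (e * (A * sa * cb + B * ca * sb))^2 ≤ (B^2 + cb^2 * A^2) * (1 - (e * (ca * cb))^2) := by
  have hX : (0:ℝ) ≤ B^2 + cb^2 * A^2 := by positivity
  have hid : (B^2 + cb^2*A^2) * (1 - (ca*cb)^2) - (A*sa*cb + B*ca*sb)^2
      = (A*cb*ca*sb - B*sa)^2 - (A^2*cb^2 + B^2)*(sa^2+ca^2-1)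
        - (A^2*cb^2 + B^2)*ca^2*(sb^2+cb^2-1) := by ring
  have hCS : (A*sa*cb + B*ca*sb)^2 ≤ (B^2 + cb^2*A^2) * (1 - (ca*cb)^2) := by
    rw [ha, hbb] at hid
    nlinarith [sq_nonneg (A*cb*ca*sb - B*sa)]
  have h2 : e^2 * (1 - (ca*cb)^2) ≤ 1 - (e * (ca*cb))^2 := by nlinarith [sq_nonneg (ca*cb)]
  have h3 := mul_le_mul_of_nonneg_left hCS (sq_nonneg e)
  have h4 := mul_le_mul_of_nonneg_left h2 hX
  nlinarith [h3, h4]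

/-- FTC-based bound: if `f'` is the derivative of `f` within `[0,1]` and `f' ≤ φ`
pointwise with both continuous on `[0,1]`, then `f 1 - f 0 ≤ ∫ φ`. -/
lemma ftc_bound (f f' φ : ℝ → ℝ)
    (hf : ∀ u ∈ Icc (0:ℝ) 1, HasDerivWithinAt f (f' u) (Icc (0:ℝ) 1) u)
    (hf' : ContinuousOn f' (Icc (0:ℝ) 1))
    (hφ : ContinuousOn φ (Icc (0:ℝ) 1))
    (hle : ∀ u ∈ Icc (0:ℝ) 1, f' u ≤ φ u) :
    f 1 - f 0 ≤ ∫ u in (0:ℝ)..1, φ u := by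
  have hI : (Set.uIcc (0:ℝ) 1) = Icc (0:ℝ) 1 := uIcc_of_le zero_le_one
  have hcf : ContinuousOn f (Icc (0:ℝ) 1) := fun u hu => (hf u hu).continuousWithinAt
  have hint' : IntervalIntegrable f' MeasureTheory.volume 0 1 :=
    (hI ▸ hf').intervalIntegrable
  have hintφ : IntervalIntegrable φ MeasureTheory.volume 0 1 :=
    (hI ▸ hφ).intervalIntegrable
  have heq : ∫ u in (0:ℝ)..1, f' u = f 1 - f 0 := by
    apply intervalIntegral.integral_eq_sub_of_hasDeriv_right_of_le zero_le_one hcf _ hint'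
    intro x hx
    exact ((hf x (Ioo_subset_Icc_self hx)).hasDerivAt
      (Icc_mem_nhds hx.1 hx.2)).hasDerivWithinAt
  rw [← heq]
  exact intervalIntegral.integral_mono_on zero_le_one hint' hintφ hle

/-- The rescaled spherical law of cosines lower bound for hemispherical warped lengths:
for `D > 0` and a `C¹` curve `u ↦ (s u, t u)` in the strip `ℝ × [0, D/2]` starting on the
equator (`t 0 = 0`) and ending at height `T = t 1`, if `d = |s 1 - s 0| ≤ D` then the
warped length is at least `(D/π) · arccos(cos(π d/D) · cos(π T/D))`. -/
theorem hemispherical_law_of_cosines_bound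
    (D T : ℝ) (hD : 0 < D) (s t s' t' : ℝ → ℝ)
    (hs : ∀ u ∈ Icc (0:ℝ) 1, HasDerivWithinAt s (s' u) (Icc (0:ℝ) 1) u)
    (ht : ∀ u ∈ Icc (0:ℝ) 1, HasDerivWithinAt t (t' u) (Icc (0:ℝ) 1) u)
    (hs' : ContinuousOn s' (Icc (0:ℝ) 1))
    (ht' : ContinuousOn t' (Icc (0:ℝ) 1))
    (htrange : ∀ u ∈ Icc (0:ℝ) 1, t u ∈ Icc (0:ℝ) (D / 2))
    (ht0 : t 0 = 0) (ht1 : t 1 = T)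
    (hd : |s 1 - s 0| ≤ D) :
    (D / π) * Real.arccos (Real.cos (π * |s 1 - s 0| / D) * Real.cos (π * T / D)) ≤
      ∫ u in (0:ℝ)..1,
        Real.sqrt ((t' u) ^ 2 + (Real.cos (π * t u / D)) ^ 2 * (s' u) ^ 2) := by
  have hπ : (0:ℝ) < π := Real.pi_pos
  set c : ℝ := π / D with hc
  have hcpos : 0 < c := div_pos hπ hD
  set a : ℝ → ℝ := fun u => c * (s u - s 0) with ha
  set b : ℝ → ℝ := fun u => c * t u with hb
  set g : ℝ → ℝ := fun u => Real.cos (a u) * Real.cos (b u) with hg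
  set g' : ℝ → ℝ := fun u =>
      (-Real.sin (a u) * (c * s' u)) * Real.cos (b u)
      + Real.cos (a u) * (-Real.sin (b u) * (c * t' u)) with hg'def
  set φ : ℝ → ℝ := fun u =>
      Real.sqrt ((t' u) ^ 2 + (Real.cos (π * t u / D)) ^ 2 * (s' u) ^ 2) with hφdef
  have hbt : ∀ u, π * t u / D = b u := fun u => by rw [hb]; ring
  -- derivative of g
  have hgderiv : ∀ u ∈ Icc (0:ℝ) 1, HasDerivWithinAt g (g' u) (Icc (0:ℝ) 1) u := by
    intro u hu
    have ha' : HasDerivWithinAt a (c * s' u) (Icc (0:ℝ) 1) u :=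
      ((hs u hu).sub_const (s 0)).const_mul c
    have hb' : HasDerivWithinAt b (c * t' u) (Icc (0:ℝ) 1) u := (ht u hu).const_mul c
    have h1 : HasDerivWithinAt (fun v => Real.cos (a v))
        (-Real.sin (a u) * (c * s' u)) (Icc (0:ℝ) 1) u :=
      (Real.hasDerivAt_cos (a u)).comp_hasDerivWithinAt u ha'
    have h2 : HasDerivWithinAt (fun v => Real.cos (b v))
        (-Real.sin (b u) * (c * t' u)) (Icc (0:ℝ) 1) u :=
      (Real.hasDerivAt_cos (b u)).comp_hasDerivWithinAt u hb'
    exact h1.mul h2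
  -- continuity facts
  have hsc : ContinuousOn s (Icc (0:ℝ) 1) := fun u hu => (hs u hu).continuousWithinAt
  have htc : ContinuousOn t (Icc (0:ℝ) 1) := fun u hu => (ht u hu).continuousWithinAt
  have hac : ContinuousOn a (Icc (0:ℝ) 1) := continuousOn_const.mul (hsc.sub continuousOn_const)
  have hbc : ContinuousOn b (Icc (0:ℝ) 1) := continuousOn_const.mul htc
  have hcosa : ContinuousOn (fun u => Real.cos (a u)) (Icc (0:ℝ) 1) :=
    Real.continuous_cos.comp_continuousOn hac
  have hcosb : ContinuousOn (fun u => Real.cos (b u)) (Icc (0:ℝ) 1) :=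
    Real.continuous_cos.comp_continuousOn hbc
  have hsina : ContinuousOn (fun u => Real.sin (a u)) (Icc (0:ℝ) 1) :=
    Real.continuous_sin.comp_continuousOn hac
  have hsinb : ContinuousOn (fun u => Real.sin (b u)) (Icc (0:ℝ) 1) :=
    Real.continuous_sin.comp_continuousOn hbc
  have hgc : ContinuousOn g (Icc (0:ℝ) 1) := hcosa.mul hcosb
  have hg'c : ContinuousOn g' (Icc (0:ℝ) 1) :=
    ((hsina.neg.mul (continuousOn_const.mul hs')).mul hcosb).add
      (hcosa.mul (hsinb.neg.mul (continuousOn_const.mul ht')))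
  have hφc : ContinuousOn φ (Icc (0:ℝ) 1) := by
    apply Real.continuous_sqrt.comp_continuousOn
    exact ((ht'.pow 2).add
      (((Real.continuous_cos.comp_continuousOn
        ((continuousOn_const.mul htc).div_const D)).pow 2).mul (hs'.pow 2)))
  have hgabs : ∀ u, |g u| ≤ 1 := by
    intro u
    rw [hg, abs_mul]
    calc |Real.cos (a u)| * |Real.cos (b u)| ≤ 1 * 1 :=
      mul_le_mul (Real.abs_cos_le_one _) (Real.abs_cos_le_one _) (abs_nonneg _) zero_le_one
    _ = 1 := mul_one 1
  set I := ∫ u in (0:ℝ)..1, φ u with hI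
  -- the key bound for each ε ∈ (0,1)
  have key : ∀ ε ∈ Ioo (0:ℝ) 1,
      Real.arccos ((1 - ε) * g 1) - Real.arccos (1 - ε) ≤ c * I := by
    intro ε hε
    have hε1 : 0 < 1 - ε := by linarith [hε.2]
    have hε2 : 1 - ε < 1 := by linarith [hε.1]
    have hwlt : ∀ u, |(1 - ε) * g u| < 1 := by
      intro u
      rw [abs_mul, abs_of_pos hε1]
      calc (1 - ε) * |g u| ≤ (1 - ε) * 1 :=
        mul_le_mul_of_nonneg_left (hgabs u) hε1.le
      _ < 1 := by linarith
    have hwpos : ∀ u, 0 < 1 - ((1 - ε) * g u) ^ 2 := by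
      intro u
      have := hwlt u
      nlinarith [abs_nonneg ((1 - ε) * g u), sq_abs ((1 - ε) * g u)]
    set f : ℝ → ℝ := fun u => Real.arccos ((1 - ε) * g u) with hf
    set f' : ℝ → ℝ := fun u =>
      -(1 / Real.sqrt (1 - ((1 - ε) * g u) ^ 2)) * ((1 - ε) * g' u) with hf'
    have hfderiv : ∀ u ∈ Icc (0:ℝ) 1, HasDerivWithinAt f (f' u) (Icc (0:ℝ) 1) u := by
      intro u hu
      have hne1 : (1 - ε) * g u ≠ -1 := by
        intro h; have := hwlt u; rw [h] at this; simp at this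
      have hne2 : (1 - ε) * g u ≠ 1 := by
        intro h; have := hwlt u; rw [h] at this; simp at this
      have hcomp := (Real.hasDerivAt_arccos hne1 hne2).comp_hasDerivWithinAt u
        ((hgderiv u hu).const_mul (1 - ε))
      exact hcomp
    have hf'c : ContinuousOn f' (Icc (0:ℝ) 1) := by
      apply ContinuousOn.mul
      · apply ContinuousOn.neg
        apply ContinuousOn.div continuousOn_const
        · exact Real.continuous_sqrt.comp_continuousOn
            (continuousOn_const.sub ((continuousOn_const.mul hgc).pow 2))
        · intro u hu
          exact (Real.sqrt_pos.mpr (hwpos u)).ne'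
      · exact continuousOn_const.mul hg'c
    have hφc' : ContinuousOn (fun u => c * φ u) (Icc (0:ℝ) 1) := continuousOn_const.mul hφc
    -- pointwise bound  f' u ≤ c * φ u
    have hle : ∀ u ∈ Icc (0:ℝ) 1, f' u ≤ c * φ u := by
      intro u hu
      have hcbeq : Real.cos (π * t u / D) = Real.cos (b u) := by rw [hbt]
      have hcφ : c * φ u = Real.sqrt ((c * t' u) ^ 2 + Real.cos (b u) ^ 2 * (c * s' u) ^ 2) := by
        rw [hφdef]
        simp only
        rw [hcbeq,
          show (c * t' u) ^ 2 + Real.cos (b u) ^ 2 * (c * s' u) ^ 2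
            = c ^ 2 * ((t' u) ^ 2 + Real.cos (b u) ^ 2 * (s' u) ^ 2) from by ring,
          Real.sqrt_mul (sq_nonneg c), Real.sqrt_sq hcpos.le]
      rw [hcφ]
      set A := c * s' u with hA
      set B := c * t' u with hB
      set α := a u with hα
      set β := b u with hβ
      have hS : 0 < Real.sqrt (1 - ((1 - ε) * g u) ^ 2) := Real.sqrt_pos.mpr (hwpos u)
      have hf'eq : f' u = (1 - ε) * (A * Real.sin α * Real.cos β
          + B * Real.cos α * Real.sin β) / Real.sqrt (1 - ((1 - ε) * g u) ^ 2) := by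
        rw [hf', hg'def]
        field_simp
        ring
      rw [hf'eq, div_le_iff₀ hS]
      set N := A * Real.sin α * Real.cos β + B * Real.cos α * Real.sin β with hN
      set Q := Real.sqrt (B ^ 2 + Real.cos β ^ 2 * A ^ 2) with hQ
      set S := Real.sqrt (1 - ((1 - ε) * g u) ^ 2) with hSdef
      have hQ0 : 0 ≤ Q := Real.sqrt_nonneg _
      have hQ2 : Q ^ 2 = B ^ 2 + Real.cos β ^ 2 * A ^ 2 :=
        Real.sq_sqrt (by positivity)
      have hS2 : S ^ 2 = 1 - ((1 - ε) * g u) ^ 2 := Real.sq_sqrt (hwpos u).le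
      have hgu : g u = Real.cos α * Real.cos β := rfl
      have hmain : ((1 - ε) * N) ^ 2 ≤ (Q * S) ^ 2 := by
        have h2 : (Q * S) ^ 2 = (B ^ 2 + Real.cos β ^ 2 * A ^ 2) * (1 - ((1 - ε) * g u) ^ 2) := by
          rw [mul_pow, hQ2, hS2]
        rw [h2, hgu, hN]
        exact cs_aux A B (1 - ε) (Real.cos α) (Real.sin α) (Real.cos β) (Real.sin β)
          (Real.sin_sq_add_cos_sq α) (Real.sin_sq_add_cos_sq β) (by nlinarith)
      calc (1 - ε) * N ≤ |(1 - ε) * N| := le_abs_self _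
        _ = Real.sqrt (((1 - ε) * N) ^ 2) := (Real.sqrt_sq_eq_abs _).symm
        _ ≤ Real.sqrt ((Q * S) ^ 2) := Real.sqrt_le_sqrt hmain
        _ = |Q * S| := Real.sqrt_sq_eq_abs _
        _ = Q * S := abs_of_nonneg (mul_nonneg hQ0 hS.le)
    have hbound := ftc_bound f f' (fun u => c * φ u) hfderiv hf'c hφc' hle
    rw [intervalIntegral.integral_const_mul] at hbound
    have hg0 : g 0 = 1 := by
      rw [hg]
      simp only
      rw [ha, hb]
      simp [ht0]
    have hf1 : f 1 = Real.arccos ((1 - ε) * g 1) := rfl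
    have hf0 : f 0 = Real.arccos (1 - ε) := by rw [hf]; simp only; rw [hg0, mul_one]
    rw [hf1, hf0] at hbound
    exact hbound
  -- pass to the limit ε → 0⁺
  have hlim : Real.arccos (g 1) ≤ c * I := by
    have hcont : Continuous fun ε : ℝ =>
        Real.arccos ((1 - ε) * g 1) - Real.arccos (1 - ε) := by
      apply Continuous.sub
      · exact Real.continuous_arccos.comp ((continuous_const.sub continuous_id).mul continuous_const)
      · exact Real.continuous_arccos.comp (continuous_const.sub continuous_id)
    have h0 : Filter.Tendsto (fun ε : ℝ =>
        Real.arccos ((1 - ε) * g 1) - Real.arccos (1 - ε)) (nhdsWithin 0 (Ioi 0))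
        (nhds (Real.arccos (g 1))) := by
      have h1 : Filter.Tendsto (fun ε : ℝ =>
          Real.arccos ((1 - ε) * g 1) - Real.arccos (1 - ε)) (nhdsWithin 0 (Ioi 0))
          (nhds (Real.arccos ((1 - 0) * g 1) - Real.arccos (1 - 0))) :=
        (hcont.tendsto 0).mono_left nhdsWithin_le_nhds
      simpa [Real.arccos_one] using h1
    refine le_of_tendsto h0 ?_
    filter_upwards [Ioo_mem_nhdsGT_of_mem (by norm_num : (0:ℝ) ∈ Ico (0:ℝ) 1)] with ε hε
    exact key ε hε
  -- identify g 1 with the target expression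
  have hg1 : g 1 = Real.cos (π * |s 1 - s 0| / D) * Real.cos (π * T / D) := by
    rw [hg]
    simp only
    congr 1
    · rw [ha]
      simp only
      rw [← Real.cos_abs, abs_mul, abs_of_pos hcpos, hc]
      congr 1; ring
    · rw [hb]
      simp only
      rw [ht1, hc]
      congr 1; ring
  rw [← hg1]
  have hfin := mul_le_mul_of_nonneg_left hlim (div_pos hD hπ).le
  calc (D / π) * Real.arccos (g 1) ≤ (D / π) * (c * I) := hfin
    _ = I := by rw [hc]; field_simp
end

section
/- Let D > 0 and let s, t : ℝ → ℝ be continuously differentiable on [0,1] with t(u) ∈ [0, D/2] for all u ∈ [0,1] and t(0) = 0. If d := |s(1) − s(0)| ≤ D/2, then the hemispherical warped length satisfies ∫₀¹ √( t′(u)² + cos(π·t(u)/D)² · s′(u)² ) du ≥ d. (Curves in the hemispherical suspension starting on the equator do not shorten equatorial distances of at most D/2, regardless of the height of the final endpoint.) -/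
set_option maxHeartbeats 1000000

open Real Set intervalIntegral

/-- Curves in the hemispherical suspension starting on the equator do not shorten
equatorial distances of at most `D/2`: for `D > 0` and a `C¹` curve `u ↦ (s u, t u)` in the
strip `ℝ × [0, D/2]` with `t 0 = 0` and `d = |s 1 - s 0| ≤ D/2`, the warped length
`∫₀¹ √(t'(u)² + cos(π t(u)/D)² s'(u)²) du` is at least `d`. -/
theorem hemispherical_no_shortcut_from_equator
    (D : ℝ) (hD : 0 < D) (s t s' t' : ℝ → ℝ)
    (hs : ∀ u ∈ Icc (0:ℝ) 1, HasDerivWithinAt s (s' u) (Icc (0:ℝ) 1) u)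
    (ht : ∀ u ∈ Icc (0:ℝ) 1, HasDerivWithinAt t (t' u) (Icc (0:ℝ) 1) u)
    (hs' : ContinuousOn s' (Icc (0:ℝ) 1))
    (ht' : ContinuousOn t' (Icc (0:ℝ) 1))
    (htrange : ∀ u ∈ Icc (0:ℝ) 1, t u ∈ Icc (0:ℝ) (D / 2))
    (ht0 : t 0 = 0)
    (hd : |s 1 - s 0| ≤ D / 2) :
    |s 1 - s 0| ≤
      ∫ u in (0:ℝ)..1,
        Real.sqrt ((t' u) ^ 2 + (Real.cos (π * t u / D)) ^ 2 * (s' u) ^ 2) := by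
  have hπ : (0:ℝ) < π := Real.pi_pos
  have hDne : D ≠ 0 := ne_of_gt hD
  set d := |s 1 - s 0| with hd_def
  have hd0 : 0 ≤ d := abs_nonneg _
  set V : ℝ → ℝ := fun u =>
    Real.sqrt ((t' u) ^ 2 + (Real.cos (π * t u / D)) ^ 2 * (s' u) ^ 2) with hV
  have hcs : ContinuousOn s (Icc 0 1) := fun u hu => (hs u hu).continuousWithinAt
  have hct : ContinuousOn t (Icc 0 1) := fun u hu => (ht u hu).continuousWithinAt
  have hθc : ContinuousOn (fun u => π * t u / D) (Icc 0 1) :=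
    (continuousOn_const.mul hct).div_const D
  have hφc : ContinuousOn (fun u => π * (s u - s 1) / D) (Icc 0 1) :=
    (continuousOn_const.mul (hcs.sub continuousOn_const)).div_const D
  have hVcont : ContinuousOn V (Icc 0 1) :=
    ((ht'.pow 2).add (((Real.continuous_cos.comp_continuousOn hθc).pow 2).mul
      (hs'.pow 2))).sqrt
  have huIcc : uIcc (0:ℝ) 1 = Icc (0:ℝ) 1 := uIcc_of_le (by norm_num)
  have hVint : IntervalIntegrable V MeasureTheory.volume 0 1 :=
    ContinuousOn.intervalIntegrable (by rw [huIcc]; exact hVcont)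
  -- the key estimate for each r < 1
  have key : ∀ r : ℝ, r ∈ Ioo (0:ℝ) 1 →
      Real.arcsin (r * Real.sin (π * d / D)) ≤ (π / D) * ∫ u in (0:ℝ)..1, V u := by
    intro r hr
    obtain ⟨hr0, hr1⟩ := hr
    set S : ℝ → ℝ := fun u =>
      Real.cos (π * t u / D) * Real.sin (π * (s u - s 1) / D) with hS
    set Sd : ℝ → ℝ := fun u =>
      -Real.sin (π * t u / D) * (π * t' u / D) * Real.sin (π * (s u - s 1) / D)
        + Real.cos (π * t u / D) * (Real.cos (π * (s u - s 1) / D) * (π * s' u / D)) with hSd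
    set g : ℝ → ℝ := fun u => Real.arcsin (r * S u) with hg
    set gd : ℝ → ℝ := fun u =>
      1 / Real.sqrt (1 - (r * S u) ^ 2) * (r * Sd u) with hgd
    have hSabs : ∀ u, |S u| ≤ 1 := by
      intro u
      calc |S u| = |Real.cos (π * t u / D)| * |Real.sin (π * (s u - s 1) / D)| := abs_mul _ _
        _ ≤ 1 * 1 := mul_le_mul (Real.abs_cos_le_one _) (Real.abs_sin_le_one _)
            (abs_nonneg _) zero_le_one
        _ = 1 := one_mul 1
    have hrS : ∀ u, |r * S u| < 1 := by
      intro u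
      calc |r * S u| = |r| * |S u| := abs_mul _ _
        _ ≤ |r| * 1 := mul_le_mul_of_nonneg_left (hSabs u) (abs_nonneg _)
        _ = r := by rw [mul_one, abs_of_pos hr0]
        _ < 1 := hr1
    have hrSsq : ∀ u, (r * S u) ^ 2 < 1 := by
      intro u
      have h := abs_lt.mp (hrS u)
      nlinarith [h.1, h.2, sq_abs (r * S u)]
    have hQpos : ∀ u, 0 < Real.sqrt (1 - (r * S u) ^ 2) := by
      intro u
      exact Real.sqrt_pos.mpr (by linarith [hrSsq u])
    have hSder : ∀ u ∈ Icc (0:ℝ) 1, HasDerivWithinAt S (Sd u) (Icc 0 1) u := by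
      intro u hu
      have h1 : HasDerivWithinAt (fun u => π * t u / D) (π * t' u / D) (Icc 0 1) u :=
        (((ht u hu).const_mul π)).div_const D
      have h2 : HasDerivWithinAt (fun u => π * (s u - s 1) / D) (π * s' u / D) (Icc 0 1) u :=
        ((((hs u hu).sub_const (s 1)).const_mul π)).div_const D
      have h3 := (h1.cos).mul (h2.sin)
      exact h3
    have hgder : ∀ u ∈ Icc (0:ℝ) 1, HasDerivWithinAt g (gd u) (Icc 0 1) u := by
      intro u hu
      have hne1 : r * S u ≠ -1 := by
        intro h; have h2 := hrS u; rw [h] at h2; simp at h2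
      have hne2 : r * S u ≠ 1 := by
        intro h; have h2 := hrS u; rw [h] at h2; simp at h2
      have harc := Real.hasDerivAt_arcsin hne1 hne2
      exact harc.comp_hasDerivWithinAt u ((hSder u hu).const_mul r)
    -- bound on the derivative
    have hbound : ∀ u ∈ Icc (0:ℝ) 1, |gd u| ≤ (π / D) * V u := by
      intro u hu
      set A := Real.sin (π * t u / D) with hA
      set B := Real.cos (π * t u / D) with hB
      set C := Real.sin (π * (s u - s 1) / D) with hC
      set E := Real.cos (π * (s u - s 1) / D) with hE
      set p := π * t' u / D with hp
      set q := π * s' u / D with hq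
      have hAB : A ^ 2 + B ^ 2 = 1 := Real.sin_sq_add_cos_sq _
      have hCE : C ^ 2 + E ^ 2 = 1 := Real.sin_sq_add_cos_sq _
      have hSu : S u = B * C := rfl
      have hSdu : Sd u = -A * p * C + B * (E * q) := rfl
      have hVnn : (0:ℝ) ≤ V u := Real.sqrt_nonneg _
      have hVsq : (V u) ^ 2 = (t' u) ^ 2 + B ^ 2 * (s' u) ^ 2 :=
        Real.sq_sqrt (by positivity)
      have h1S : 0 ≤ 1 - (S u) ^ 2 := by
        have h := abs_le.mp (hSabs u)
        nlinarith [h.1, h.2]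
      have hident : (1 - (B * C) ^ 2) * (p ^ 2 + B ^ 2 * q ^ 2)
          - (-A * p * C + B * (E * q)) ^ 2
          = (E * p + A * B * C * q) ^ 2 := by
        linear_combination (-(p ^ 2 + B ^ 2 * q ^ 2)) * hCE
          + (-(C ^ 2 * (p ^ 2 + B ^ 2 * q ^ 2))) * hAB
      have hexp : ((π / D) * V u) ^ 2 = p ^ 2 + B ^ 2 * q ^ 2 := by
        rw [mul_pow, hVsq, hp, hq]
        field_simp
      have step1 : (Sd u) ^ 2 ≤ (1 - (S u) ^ 2) * ((π / D) * V u) ^ 2 := by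
        rw [hexp, hSdu, hSu]
        nlinarith [hident, sq_nonneg (E * p + A * B * C * q)]
      have hSdabs : |Sd u| ≤ Real.sqrt (1 - (S u) ^ 2) * ((π / D) * V u) := by
        rw [← Real.sqrt_sq_eq_abs]
        calc Real.sqrt ((Sd u) ^ 2)
            ≤ Real.sqrt ((1 - (S u) ^ 2) * ((π / D) * V u) ^ 2) := Real.sqrt_le_sqrt step1
          _ = Real.sqrt (1 - (S u) ^ 2) * ((π / D) * V u) := by
              rw [Real.sqrt_mul h1S, Real.sqrt_sq (by positivity)]
      have hsqrtle : r * Real.sqrt (1 - (S u) ^ 2) ≤ Real.sqrt (1 - (r * S u) ^ 2) := by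
        have h1 : r * Real.sqrt (1 - (S u) ^ 2) = Real.sqrt (r ^ 2 * (1 - (S u) ^ 2)) := by
          rw [Real.sqrt_mul (sq_nonneg r), Real.sqrt_sq hr0.le]
        rw [h1]
        apply Real.sqrt_le_sqrt
        nlinarith [sq_nonneg (S u)]
      have hQ := hQpos u
      show |1 / Real.sqrt (1 - (r * S u) ^ 2) * (r * Sd u)| ≤ (π / D) * V u
      rw [abs_mul, abs_mul,
        abs_of_pos (by positivity : (0:ℝ) < 1 / Real.sqrt (1 - (r * S u) ^ 2)),
        abs_of_pos hr0, div_mul_eq_mul_div, one_mul, div_le_iff₀ hQ]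
      calc r * |Sd u| ≤ r * (Real.sqrt (1 - (S u) ^ 2) * ((π / D) * V u)) :=
            mul_le_mul_of_nonneg_left hSdabs hr0.le
        _ = (r * Real.sqrt (1 - (S u) ^ 2)) * ((π / D) * V u) := by ring
        _ ≤ Real.sqrt (1 - (r * S u) ^ 2) * ((π / D) * V u) :=
            mul_le_mul_of_nonneg_right hsqrtle (by positivity)
        _ = (π / D) * V u * Real.sqrt (1 - (r * S u) ^ 2) := by ring
    -- continuity of gd
    have hScont : ContinuousOn S (Icc 0 1) :=
      (Real.continuous_cos.comp_continuousOn hθc).mul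
        (Real.continuous_sin.comp_continuousOn hφc)
    have hSdcont : ContinuousOn Sd (Icc 0 1) := by
      apply ContinuousOn.add
      · exact (((Real.continuous_sin.comp_continuousOn hθc).neg).mul
          ((continuousOn_const.mul ht').div_const D)).mul
          (Real.continuous_sin.comp_continuousOn hφc)
      · exact (Real.continuous_cos.comp_continuousOn hθc).mul
          ((Real.continuous_cos.comp_continuousOn hφc).mul
            ((continuousOn_const.mul hs').div_const D))
    have hgdcont : ContinuousOn gd (Icc 0 1) := by
      apply ContinuousOn.mul
      · apply ContinuousOn.div continuousOn_const
        · exact (continuousOn_const.sub ((continuousOn_const.mul hScont).pow 2)).sqrt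
        · intro u _; exact ne_of_gt (hQpos u)
      · exact continuousOn_const.mul hSdcont
    have hgdint : IntervalIntegrable gd MeasureTheory.volume 0 1 :=
      ContinuousOn.intervalIntegrable (by rw [huIcc]; exact hgdcont)
    have hgcont : ContinuousOn g (Icc 0 1) := fun u hu => (hgder u hu).continuousWithinAt
    -- FTC
    have hftc : ∫ u in (0:ℝ)..1, gd u = g 1 - g 0 := by
      apply intervalIntegral.integral_eq_sub_of_hasDeriv_right_of_le (by norm_num) hgcont
        _ hgdint
      intro x hx
      have hmem : Icc (0:ℝ) 1 ∈ nhdsWithin x (Ioi x) := by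
        apply Filter.mem_of_superset (Ioc_mem_nhdsGT_of_mem ⟨le_refl x, hx.2⟩)
        exact fun y hy => ⟨le_of_lt (lt_of_le_of_lt hx.1.le hy.1), hy.2⟩
      exact (hgder x ⟨hx.1.le, hx.2.le⟩).mono_of_mem_nhdsWithin hmem
    -- integral bound
    have hintle : |g 1 - g 0| ≤ (π / D) * ∫ u in (0:ℝ)..1, V u := by
      rw [← hftc]
      calc |∫ u in (0:ℝ)..1, gd u| ≤ ∫ u in (0:ℝ)..1, |gd u| :=
            intervalIntegral.abs_integral_le_integral_abs (by norm_num)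
        _ ≤ ∫ u in (0:ℝ)..1, (π / D) * V u := by
            apply intervalIntegral.integral_mono_on (by norm_num)
              (ContinuousOn.intervalIntegrable (by rw [huIcc]; exact hgdcont.abs))
              (hVint.const_mul _)
            exact hbound
        _ = (π / D) * ∫ u in (0:ℝ)..1, V u := intervalIntegral.integral_const_mul _ _
    -- compute endpoints
    have hg1 : g 1 = 0 := by
      simp [hg, hS]
    have hg0 : g 0 = Real.arcsin (r * Real.sin (π * (s 0 - s 1) / D)) := by
      simp [hg, hS, ht0]
    -- |sin(π(s0-s1)/D)| = sin(π d / D)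
    have hxabs : |π * (s 0 - s 1) / D| = π * d / D := by
      rw [abs_div, abs_mul, abs_of_pos hπ, abs_of_pos hD, abs_sub_comm]
    have hxle : |π * (s 0 - s 1) / D| ≤ π / 2 := by
      rw [hxabs, div_le_div_iff₀ hD (by norm_num : (0:ℝ) < 2)]
      nlinarith
    have hsinabs : |Real.sin (π * (s 0 - s 1) / D)| = Real.sin (π * d / D) := by
      set x := π * (s 0 - s 1) / D with hx
      rcases le_or_gt 0 x with hx0 | hx0
      · rw [← hxabs, abs_of_nonneg hx0, abs_of_nonneg]
        apply Real.sin_nonneg_of_nonneg_of_le_pi hx0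
        calc x = |x| := (abs_of_nonneg hx0).symm
          _ ≤ π / 2 := hxle
          _ ≤ π := by linarith
      · rw [← hxabs, abs_of_neg hx0, Real.sin_neg, abs_of_nonpos]
        apply Real.sin_nonpos_of_nonpos_of_neg_pi_le hx0.le
        have h2 : |x| ≤ π / 2 := hxle
        rw [abs_of_neg hx0] at h2
        linarith
    have harcabs : ∀ x : ℝ, |Real.arcsin x| = Real.arcsin |x| := by
      intro x
      rcases le_or_gt 0 x with h | h
      · rw [abs_of_nonneg h, abs_of_nonneg (Real.arcsin_nonneg.mpr h)]
      · have h1 : Real.arcsin x < 0 := by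
          by_contra hcon
          push_neg at hcon
          exact absurd (Real.arcsin_nonneg.mp hcon) (not_le.mpr h)
        rw [abs_of_neg h, abs_of_neg h1, ← Real.arcsin_neg]
    calc Real.arcsin (r * Real.sin (π * d / D))
        = Real.arcsin (r * |Real.sin (π * (s 0 - s 1) / D)|) := by rw [hsinabs]
      _ = Real.arcsin (|r * Real.sin (π * (s 0 - s 1) / D)|) := by
          rw [abs_mul, abs_of_pos hr0]
      _ = |Real.arcsin (r * Real.sin (π * (s 0 - s 1) / D))| := (harcabs _).symm
      _ = |g 1 - g 0| := by rw [hg1, hg0, zero_sub, abs_neg]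
      _ ≤ (π / D) * ∫ u in (0:ℝ)..1, V u := hintle
  -- take the limit r → 1⁻
  have hlim : Filter.Tendsto (fun r : ℝ => Real.arcsin (r * Real.sin (π * d / D)))
      (nhdsWithin 1 (Iio 1)) (nhds (Real.arcsin (Real.sin (π * d / D)))) := by
    have hc : ContinuousAt (fun r : ℝ => Real.arcsin (r * Real.sin (π * d / D))) 1 :=
      Real.continuous_arcsin.continuousAt.comp (continuousAt_id.mul continuousAt_const)
    have h2 : Filter.Tendsto (fun r : ℝ => Real.arcsin (r * Real.sin (π * d / D)))
        (nhdsWithin 1 (Iio 1)) (nhds (Real.arcsin ((1:ℝ) * Real.sin (π * d / D)))) :=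
      hc.tendsto.mono_left nhdsWithin_le_nhds
    simpa using h2
  have hIoo : Ioo (0:ℝ) 1 ∈ nhdsWithin (1:ℝ) (Iio 1) :=
    Ioo_mem_nhdsLT_of_mem ⟨by norm_num, le_refl 1⟩
  have hfinal : Real.arcsin (Real.sin (π * d / D)) ≤ (π / D) * ∫ u in (0:ℝ)..1, V u :=
    le_of_tendsto hlim (Filter.eventually_of_mem hIoo key)
  have harc : Real.arcsin (Real.sin (π * d / D)) = π * d / D := by
    apply Real.arcsin_sin
    · have h3 : 0 ≤ π * d / D := by positivity
      linarith
    · rw [div_le_div_iff₀ hD (by norm_num : (0:ℝ) < 2)]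
      nlinarith
  rw [harc] at hfinal
  have hπD : (0:ℝ) < π / D := by positivity
  have hfin2 : (π / D) * d ≤ (π / D) * ∫ u in (0:ℝ)..1, V u := by
    calc (π / D) * d = π * d / D := by ring
      _ ≤ _ := hfinal
  exact (mul_le_mul_iff_right₀ hπD).mp hfin2
end

section
/- Let X be a length space and let (W_k)_{k∈ℕ} be a nondecreasing sequence of open subsets of X with ⋃_k W_k = X. Then for all x, y ∈ X, the sequence k ↦ d_{W_k}(x,y) of induced length distances is antitone, and it converges to edist(x,y) as k → ∞. -/
open Set Filter ENNReal

/-- The induced length distance of a subset `W` of a metric space: the infimum of the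
lengths (total variations over `[0,1]`) of continuous curves from `x` to `y` whose
image on `[0,1]` lies in `W`; it is `∞` when no such curve exists. -/
noncomputable def inducedLengthDist {X : Type*} [MetricSpace X] (W : Set X) (x y : X) :
    ℝ≥0∞ :=
  sInf {l : ℝ≥0∞ | ∃ γ : ℝ → X, Continuous γ ∧ γ 0 = x ∧ γ 1 = y ∧
    (∀ u ∈ Icc (0:ℝ) 1, γ u ∈ W) ∧ l = eVariationOn γ (Icc (0:ℝ) 1)}

/-- A metric space is a length space when the extended distance between any two points
equals the induced length distance with `W = X`. -/
def IsLengthSpace (X : Type*) [MetricSpace X] : Prop :=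
  ∀ x y : X, edist x y = inducedLengthDist (Set.univ : Set X) x y

lemma edist_le_inducedLengthDist {X : Type*} [MetricSpace X] (W : Set X) (x y : X) :
    edist x y ≤ inducedLengthDist W x y := by
  refine le_sInf ?_
  rintro l ⟨γ, hγc, h0, h1, hmem, rfl⟩
  rw [← h0, ← h1]
  exact eVariationOn.edist_le γ (by constructor <;> norm_num) (by constructor <;> norm_num)

/-- Along a nondecreasing open exhaustion `W_k` of a length space, for any two points the
induced length distances `d_{W_k}(x,y)` form an antitone sequence converging to the
ambient distance `edist x y`. -/
theorem inducedLengthDist_exhaustion_tendsto_edist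
    {X : Type*} [MetricSpace X] (hX : IsLengthSpace X)
    (W : ℕ → Set X) (hW : Monotone W) (hWopen : ∀ k, IsOpen (W k))
    (hWunion : (⋃ k, W k) = Set.univ) (x y : X) :
    Antitone (fun k => inducedLengthDist (W k) x y) ∧
    Tendsto (fun k => inducedLengthDist (W k) x y) atTop (nhds (edist x y)) := by
  have hanti : Antitone (fun k => inducedLengthDist (W k) x y) := by
    intro m n hmn
    apply sInf_le_sInf
    rintro l ⟨γ, hγc, h0, h1, hmem, rfl⟩
    exact ⟨γ, hγc, h0, h1, fun u hu => hW hmn (hmem u hu), rfl⟩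
  refine ⟨hanti, ?_⟩
  have key : ⨅ k, inducedLengthDist (W k) x y = edist x y := by
    refine le_antisymm ?_ (le_iInf fun k => edist_le_inducedLengthDist _ _ _)
    refine ENNReal.le_of_forall_pos_le_add fun ε hε hfin => ?_
    have hlt : inducedLengthDist (Set.univ : Set X) x y < edist x y + ε := by
      rw [← hX x y]
      exact ENNReal.lt_add_right hfin.ne (by exact_mod_cast hε.ne')
    rw [inducedLengthDist, sInf_lt_iff] at hlt
    obtain ⟨l, ⟨γ, hγc, h0, h1, -, rfl⟩, hl⟩ := hlt
    -- the image of γ on [0,1] is compact; it is covered by the directed open family W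
    have hcomp : IsCompact (γ '' Icc (0:ℝ) 1) := (isCompact_Icc).image hγc
    have hcover : γ '' Icc (0:ℝ) 1 ⊆ ⋃ k, W k := by
      rw [hWunion]; exact subset_univ _
    obtain ⟨k, hk⟩ := hcomp.elim_directed_cover W hWopen hcover (hW.directed_le)
    have hle : inducedLengthDist (W k) x y ≤ eVariationOn γ (Icc (0:ℝ) 1) :=
      sInf_le ⟨γ, hγc, h0, h1, fun u hu => hk ⟨u, hu, rfl⟩, rfl⟩
    exact le_trans (iInf_le _ k) (le_trans hle hl.le)
  rw [← key]
  exact tendsto_atTop_iInf hanti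
end

section
/- Let X be a length space, let (W_k)_{k∈ℕ} be a nondecreasing sequence of open subsets of X with ⋃_k W_k = X, and let K ⊆ W₀ be a compact set such that d_{W₀}(x,y) < ∞ for all x, y ∈ K. Then the induced length distances converge to the ambient distance uniformly on K: the quantity sup_{x,y ∈ K} ( d_{W_k}(x,y) − edist(x,y) ) (computed with truncated subtraction in [0,∞]) tends to 0 as k → ∞. -/
open Set Filter ENNReal

/-- From a strict upper bound on the induced length distance, extract a curve. -/
lemma exists_curve_lt {X : Type*} [MetricSpace X] {W : Set X} {x y : X} {b : ℝ≥0∞}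
    (h : inducedLengthDist W x y < b) :
    ∃ γ : ℝ → X, Continuous γ ∧ γ 0 = x ∧ γ 1 = y ∧ (∀ u ∈ Icc (0:ℝ) 1, γ u ∈ W) ∧
      eVariationOn γ (Icc (0:ℝ) 1) < b := by
  unfold inducedLengthDist at h
  obtain ⟨l, hl, hlt⟩ := sInf_lt_iff.mp h
  obtain ⟨γ, h1, h2, h3, h4, rfl⟩ := hl
  exact ⟨γ, h1, h2, h3, h4, hlt⟩

/-- Induced length distance is antitone in the subset. -/
lemma ild_anti {X : Type*} [MetricSpace X] {W W' : Set X} (h : W ⊆ W') (x y : X) :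
    inducedLengthDist W' x y ≤ inducedLengthDist W x y := by
  apply sInf_le_sInf
  rintro l ⟨γ, h1, h2, h3, h4, h5⟩
  exact ⟨γ, h1, h2, h3, fun u hu => h (h4 u hu), h5⟩

/-- Concatenation bound: the induced length distance from `x` to `z` is at most the sum of
the lengths of a curve from `x` to `y` and a curve from `y` to `z`, both inside `W`. -/
lemma ild_le_concat {X : Type*} [MetricSpace X] (W : Set X) {x y z : X}
    {γ₁ γ₂ : ℝ → X} (h₁c : Continuous γ₁) (h₁0 : γ₁ 0 = x) (h₁1 : γ₁ 1 = y)
    (h₁W : ∀ u ∈ Icc (0:ℝ) 1, γ₁ u ∈ W)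
    (h₂c : Continuous γ₂) (h₂0 : γ₂ 0 = y) (h₂1 : γ₂ 1 = z)
    (h₂W : ∀ u ∈ Icc (0:ℝ) 1, γ₂ u ∈ W) :
    inducedLengthDist W x z ≤
      eVariationOn γ₁ (Icc (0:ℝ) 1) + eVariationOn γ₂ (Icc (0:ℝ) 1) := by
  classical
  let γ : ℝ → X := fun t => if t ≤ 1/2 then γ₁ (2*t) else γ₂ (2*t - 1)
  have hite : ∀ t, γ t = if t ≤ 1/2 then γ₁ (2*t) else γ₂ (2*t - 1) := fun t => rfl
  have hmid : γ₁ (2 * (1/2 : ℝ)) = γ₂ (2 * (1/2 : ℝ) - 1) := by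
    norm_num [h₁1, h₂0]
  have hcont : Continuous γ := by
    refine Continuous.if_le
      (h₁c.comp (continuous_const.mul continuous_id))
      (h₂c.comp ((continuous_const.mul continuous_id).sub continuous_const))
      continuous_id continuous_const ?_
    intro t ht
    subst ht
    exact hmid
  have hγ0 : γ 0 = x := by
    rw [hite, if_pos (by norm_num : (0:ℝ) ≤ 1/2)]
    rw [mul_zero, h₁0]
  have hγ1 : γ 1 = z := by
    rw [hite, if_neg (by norm_num : ¬ (1:ℝ) ≤ 1/2)]
    norm_num [h₂1]
  have hγW : ∀ u ∈ Icc (0:ℝ) 1, γ u ∈ W := by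
    intro u hu
    by_cases h : u ≤ 1/2
    · rw [hite, if_pos h]
      exact h₁W _ ⟨by linarith [hu.1], by linarith⟩
    · rw [hite, if_neg h]
      push_neg at h
      exact h₂W _ ⟨by linarith, by linarith [hu.2]⟩
  have himg1 : (fun t : ℝ => 2*t) '' Icc (0:ℝ) (1/2) = Icc (0:ℝ) 1 := by
    ext u
    constructor
    · rintro ⟨t, ht, rfl⟩
      simp only [Set.mem_Icc] at ht ⊢
      constructor <;> linarith
    · intro hu
      exact ⟨u/2, ⟨by linarith [hu.1], by linarith [hu.2]⟩, by ring⟩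
  have himg2 : (fun t : ℝ => 2*t - 1) '' Icc (1/2:ℝ) 1 = Icc (0:ℝ) 1 := by
    ext u
    constructor
    · rintro ⟨t, ht, rfl⟩
      simp only [Set.mem_Icc] at ht ⊢
      constructor <;> linarith
    · intro hu
      exact ⟨(u+1)/2, ⟨by linarith [hu.1], by linarith [hu.2]⟩, by ring⟩
  have v1 : eVariationOn γ (Icc (0:ℝ) (1/2)) = eVariationOn γ₁ (Icc (0:ℝ) 1) := by
    have e1 : EqOn γ (γ₁ ∘ fun t : ℝ => 2*t) (Icc (0:ℝ) (1/2)) := by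
      intro t ht
      rw [hite, if_pos ht.2]
      rfl
    have hmono : MonotoneOn (fun t : ℝ => 2*t) (Icc (0:ℝ) (1/2)) := by
      intro a _ b _ hab
      simp only
      linarith
    rw [eVariationOn.eq_of_eqOn e1, eVariationOn.comp_eq_of_monotoneOn γ₁ _ hmono, himg1]
  have v2 : eVariationOn γ (Icc (1/2:ℝ) 1) = eVariationOn γ₂ (Icc (0:ℝ) 1) := by
    have e2 : EqOn γ (γ₂ ∘ fun t : ℝ => 2*t - 1) (Icc (1/2:ℝ) 1) := by
      intro t ht
      by_cases h : t ≤ 1/2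
      · have : t = 1/2 := le_antisymm h ht.1
        subst this
        rw [hite, if_pos le_rfl]
        exact hmid
      · rw [hite, if_neg h]
        rfl
    have hmono : MonotoneOn (fun t : ℝ => 2*t - 1) (Icc (1/2:ℝ) 1) := by
      intro a _ b _ hab
      simp only
      linarith
    rw [eVariationOn.eq_of_eqOn e2, eVariationOn.comp_eq_of_monotoneOn γ₂ _ hmono, himg2]
  have hsplit : eVariationOn γ (Icc (0:ℝ) (1/2)) + eVariationOn γ (Icc (1/2:ℝ) 1)
      = eVariationOn γ (Icc (0:ℝ) 1) := by
    have h := eVariationOn.Icc_add_Icc γ (s := (univ : Set ℝ))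
      (by norm_num : (0:ℝ) ≤ 1/2) (by norm_num : (1/2:ℝ) ≤ 1) (mem_univ _)
    simpa using h
  exact sInf_le ⟨γ, hcont, hγ0, hγ1, hγW, by rw [← hsplit, v1, v2]⟩

/-- Triangle inequality for the induced length distance. -/
lemma ild_triangle {X : Type*} [MetricSpace X] (W : Set X) (x y z : X) :
    inducedLengthDist W x z ≤ inducedLengthDist W x y + inducedLengthDist W y z := by
  refine ENNReal.le_of_forall_pos_le_add fun δ hδ htop => ?_
  have hδ' : ((δ : ℝ≥0∞)/2) ≠ 0 :=
    (ENNReal.half_pos (by exact_mod_cast hδ.ne' : (δ:ℝ≥0∞) ≠ 0)).ne'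
  have h1 : inducedLengthDist W x y ≠ ⊤ := (ENNReal.add_lt_top.mp htop).1.ne
  have h2 : inducedLengthDist W y z ≠ ⊤ := (ENNReal.add_lt_top.mp htop).2.ne
  obtain ⟨γ₁, c1, a1, b1, m1, l1⟩ := exists_curve_lt (ENNReal.lt_add_right h1 hδ')
  obtain ⟨γ₂, c2, a2, b2, m2, l2⟩ := exists_curve_lt (ENNReal.lt_add_right h2 hδ')
  calc inducedLengthDist W x z
      ≤ eVariationOn γ₁ (Icc (0:ℝ) 1) + eVariationOn γ₂ (Icc (0:ℝ) 1) :=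
        ild_le_concat W c1 a1 b1 m1 c2 a2 b2 m2
    _ ≤ (inducedLengthDist W x y + (δ:ℝ≥0∞)/2) + (inducedLengthDist W y z + (δ:ℝ≥0∞)/2) :=
        add_le_add l1.le l2.le
    _ = inducedLengthDist W x y + inducedLengthDist W y z + δ := by
        rw [add_add_add_comm, ENNReal.add_halves]

/-- In a length space there exist curves of length arbitrarily close to the distance. -/
lemma exists_short_curve {X : Type*} [MetricSpace X] (hX : IsLengthSpace X) (x y : X)
    {ε : ℝ≥0∞} (hε : 0 < ε) :
    ∃ γ : ℝ → X, Continuous γ ∧ γ 0 = x ∧ γ 1 = y ∧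
      eVariationOn γ (Icc (0:ℝ) 1) < edist x y + ε := by
  have hlt : inducedLengthDist (univ : Set X) x y < edist x y + ε := by
    rw [← hX x y]
    exact ENNReal.lt_add_right (edist_ne_top x y) hε.ne'
  obtain ⟨γ, h1, h2, h3, -, h5⟩ := exists_curve_lt hlt
  exact ⟨γ, h1, h2, h3, h5⟩

/-- If a ball around `x` lies in `W`, then points of that ball are joined to `x` inside `W`
with induced length distance at most the ambient distance. -/
lemma ild_le_edist_of_ball {X : Type*} [MetricSpace X] (hX : IsLengthSpace X) {W : Set X}
    {x y : X} {r : ℝ≥0∞} (hball : Metric.eball x r ⊆ W) (hxy : edist x y < r) :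
    inducedLengthDist W x y ≤ edist x y := by
  refine ENNReal.le_of_forall_pos_le_add fun δ hδ _ => ?_
  obtain ⟨c, hc1, hc2⟩ := exists_between hxy
  have hεpos : 0 < min (δ : ℝ≥0∞) (c - edist x y) :=
    lt_min (by exact_mod_cast hδ) (tsub_pos_of_lt hc1)
  obtain ⟨γ, hc, h0, h1, hvar⟩ := exists_short_curve hX x y hεpos
  have hvar' : eVariationOn γ (Icc (0:ℝ) 1) < r := by
    calc eVariationOn γ (Icc (0:ℝ) 1)
        < edist x y + min (δ : ℝ≥0∞) (c - edist x y) := hvar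
      _ ≤ edist x y + (c - edist x y) := add_le_add_right (min_le_right _ _) _
      _ = c := add_tsub_cancel_of_le hc1.le
      _ < r := hc2
  have hmem : ∀ u ∈ Icc (0:ℝ) 1, γ u ∈ W := by
    intro u hu
    apply hball
    rw [EMetric.mem_ball, edist_comm, ← h0]
    exact lt_of_le_of_lt
      (eVariationOn.edist_le γ (Set.mem_Icc.mpr ⟨le_refl (0:ℝ), by norm_num⟩) hu) hvar'
  calc inducedLengthDist W x y
      ≤ eVariationOn γ (Icc (0:ℝ) 1) := sInf_le ⟨γ, hc, h0, h1, hmem, rfl⟩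
    _ ≤ edist x y + min (δ : ℝ≥0∞) (c - edist x y) := hvar.le
    _ ≤ edist x y + δ := add_le_add_right (min_le_left _ _) _

/-- Pointwise convergence of the induced length distances along an exhaustion. -/
lemma ild_pointwise {X : Type*} [MetricSpace X] (hX : IsLengthSpace X) (W : ℕ → Set X)
    (hW : Monotone W) (hWopen : ∀ k, IsOpen (W k)) (hWunion : (⋃ k, W k) = Set.univ)
    (x y : X) {ε : ℝ≥0∞} (hε : 0 < ε) :
    ∃ N, inducedLengthDist (W N) x y ≤ edist x y + ε := by
  obtain ⟨γ, hc, h0, h1, hvar⟩ := exists_short_curve hX x y hε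
  have hcomp : IsCompact (γ '' Icc (0:ℝ) 1) := (isCompact_Icc).image hc
  have hcover : γ '' Icc (0:ℝ) 1 ⊆ ⋃ k, W k := by rw [hWunion]; exact subset_univ _
  obtain ⟨t, ht⟩ := hcomp.elim_finite_subcover W hWopen hcover
  refine ⟨t.sup id, ?_⟩
  have hsub : γ '' Icc (0:ℝ) 1 ⊆ W (t.sup id) := by
    intro z hz
    obtain ⟨i, hi, hzi⟩ := mem_iUnion₂.mp (ht hz)
    exact hW (Finset.le_sup (f := id) hi) hzi
  exact le_trans
    (sInf_le ⟨γ, hc, h0, h1, fun u hu => hsub (mem_image_of_mem γ hu), rfl⟩) hvar.le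

/-- Along a nondecreasing open exhaustion `W_k` of a length space, the induced length
distances converge to the ambient distance uniformly on any compact `K ⊆ W₀` on which
`d_{W₀}` is finite: `sup_{x,y ∈ K} (d_{W_k}(x,y) - edist x y) → 0`. -/
theorem inducedLengthDist_exhaustion_tendstoUniformly
    {X : Type*} [MetricSpace X] (hX : IsLengthSpace X)
    (W : ℕ → Set X) (hW : Monotone W) (hWopen : ∀ k, IsOpen (W k))
    (hWunion : (⋃ k, W k) = Set.univ)
    (K : Set X) (hK : IsCompact K) (hKW : K ⊆ W 0)
    (hfin : ∀ x ∈ K, ∀ y ∈ K, inducedLengthDist (W 0) x y < ⊤) :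
    Tendsto
      (fun k => ⨆ x ∈ K, ⨆ y ∈ K, (inducedLengthDist (W k) x y - edist x y))
      atTop (nhds 0) := by
  classical
  rw [ENNReal.tendsto_atTop_zero]
  intro ε hε
  have hanti : ∀ {k k' : ℕ}, k ≤ k' →
      (⨆ x ∈ K, ⨆ y ∈ K, (inducedLengthDist (W k') x y - edist x y)) ≤
      (⨆ x ∈ K, ⨆ y ∈ K, (inducedLengthDist (W k) x y - edist x y)) := by
    intro k k' hkk'
    exact iSup_mono fun x => iSup_mono fun _ => iSup_mono fun y => iSup_mono fun _ =>
      tsub_le_tsub_right (ild_anti (hW hkk') x y) _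
  suffices h : ∃ N, (⨆ x ∈ K, ⨆ y ∈ K, (inducedLengthDist (W N) x y - edist x y)) ≤ ε by
    obtain ⟨N, hN⟩ := h
    exact ⟨N, fun n hn => le_trans (hanti hn) hN⟩
  -- Lebesgue-type radius for `K ⊆ W 0`
  obtain ⟨δ, hδpos, hδ⟩ := hK.exists_thickening_subset_open (hWopen 0) hKW
  have hballW : ∀ x ∈ K, EMetric.ball x (ENNReal.ofReal δ) ⊆ W 0 := by
    intro x hx z hz
    apply hδ
    rw [Metric.mem_thickening_iff_infEdist_lt]
    exact lt_of_le_of_lt (EMetric.infEdist_le_edist_of_mem hx) hz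
  have hδ0 : (0:ℝ≥0∞) < ENNReal.ofReal δ := ENNReal.ofReal_pos.mpr hδpos
  set ε' : ℝ≥0∞ := min (ε/2/2/2) (ENNReal.ofReal δ / 2) with hε'def
  have hε'pos : 0 < ε' := by
    refine lt_min ?_ (ENNReal.half_pos hδ0.ne')
    exact ENNReal.half_pos (ENNReal.half_pos (ENNReal.half_pos hε.ne').ne').ne'
  have hε'δ : ε' < ENNReal.ofReal δ :=
    lt_of_le_of_lt (min_le_right _ _) (ENNReal.half_lt_self hδ0.ne' ENNReal.ofReal_ne_top)
  have hε'le : ε' ≤ ε/2/2/2 := min_le_left _ _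
  -- finite net
  have hcov : K ⊆ ⋃ z ∈ K, EMetric.ball z ε' := fun x hx =>
    mem_iUnion₂.mpr ⟨x, hx, EMetric.mem_ball_self hε'pos⟩
  obtain ⟨s, hsK, hsfin, hscov⟩ :=
    hK.elim_finite_subcover_image (fun z _ => EMetric.isOpen_ball) hcov
  have hpt : ∀ i j : X, ∃ N, inducedLengthDist (W N) i j ≤ edist i j + ε/2 :=
    fun i j => ild_pointwise hX W hW hWopen hWunion i j (ENNReal.half_pos hε.ne')
  choose P hP using hpt
  set N := (hsfin.toFinset ×ˢ hsfin.toFinset).sup (fun p => P p.1 p.2) with hNdef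
  refine ⟨N, ?_⟩
  refine iSup_le fun x => iSup_le fun hx => iSup_le fun y => iSup_le fun hy => ?_
  rw [tsub_le_iff_right]
  obtain ⟨i, hiS, hxi⟩ := mem_iUnion₂.mp (hscov hx)
  obtain ⟨j, hjS, hyj⟩ := mem_iUnion₂.mp (hscov hy)
  have hxi' : edist x i < ε' := hxi
  have hyj' : edist y j < ε' := hyj
  have hiK : i ∈ K := hsK hiS
  have hjK : j ∈ K := hsK hjS
  have hW0N : W 0 ⊆ W N := hW (Nat.zero_le N)
  have h1 : inducedLengthDist (W N) x i ≤ edist x i :=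
    ild_le_edist_of_ball hX ((hballW x hx).trans hW0N) (hxi'.trans hε'δ)
  have h3 : inducedLengthDist (W N) j y ≤ edist j y := by
    refine ild_le_edist_of_ball hX ((hballW j hjK).trans hW0N) ?_
    rw [edist_comm]
    exact hyj'.trans hε'δ
  have hPle : P i j ≤ N := by
    have hmem : ((i, j) : X × X) ∈ hsfin.toFinset ×ˢ hsfin.toFinset :=
      Finset.mem_product.mpr ⟨hsfin.mem_toFinset.mpr hiS, hsfin.mem_toFinset.mpr hjS⟩
    exact Finset.le_sup (f := fun p : X × X => P p.1 p.2) hmem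
  have h2 : inducedLengthDist (W N) i j ≤ edist i j + ε/2 :=
    le_trans (ild_anti (hW hPle) i j) (hP i j)
  have hij : edist i j ≤ ε' + (edist x y + ε') := by
    calc edist i j ≤ edist i x + edist x j := edist_triangle _ _ _
      _ ≤ edist i x + (edist x y + edist y j) := add_le_add_right (edist_triangle _ _ _) _
      _ ≤ ε' + (edist x y + ε') := by
          refine add_le_add ?_ (add_le_add_right hyj'.le _)
          rw [edist_comm]
          exact hxi'.le
  have hbig : inducedLengthDist (W N) x y ≤ ε' + (((ε' + (edist x y + ε')) + ε/2) + ε') := by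
    calc inducedLengthDist (W N) x y
        ≤ inducedLengthDist (W N) x i + inducedLengthDist (W N) i y :=
          ild_triangle (W N) x i y
      _ ≤ inducedLengthDist (W N) x i +
            (inducedLengthDist (W N) i j + inducedLengthDist (W N) j y) :=
          add_le_add_right (ild_triangle (W N) i j y) _
      _ ≤ edist x i + ((edist i j + ε/2) + edist j y) :=
          add_le_add h1 (add_le_add h2 h3)
      _ ≤ ε' + (((ε' + (edist x y + ε')) + ε/2) + ε') := by
          refine add_le_add hxi'.le (add_le_add (add_le_add_left hij _) ?_)
          rw [edist_comm]
          exact hyj'.le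
  have harith : ε' + (((ε' + (edist x y + ε')) + ε/2) + ε') ≤ ε + edist x y := by
    calc ε' + (((ε' + (edist x y + ε')) + ε/2) + ε')
        = edist x y + ((ε' + ε') + (ε' + ε') + ε/2) := by ring
      _ ≤ edist x y + ((ε/2/2/2 + ε/2/2/2) + (ε/2/2/2 + ε/2/2/2) + ε/2) := by
          gcongr
      _ = edist x y + (ε/2/2 + ε/2/2 + ε/2) := by rw [ENNReal.add_halves]
      _ = edist x y + (ε/2 + ε/2) := by rw [ENNReal.add_halves]
      _ = edist x y + ε := by rw [ENNReal.add_halves]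
      _ = ε + edist x y := add_comm _ _
  exact le_trans hbig harith
end

section
/- Let X be a length space, let (W_k)_{k∈ℕ} be a nondecreasing sequence of open subsets of X with ⋃_k W_k = X, and let A ⊆ X be a set whose closure is compact and contained in W₀. Then the intrinsic diameters of A measured in W_k satisfy limsup_{k→∞} ( sup_{x,y ∈ A} d_{W_k}(x,y) ) ≤ sup_{x,y ∈ A} edist(x,y). -/
open Set Filter ENNReal

section Aux

variable {X : Type*} [MetricSpace X]

/-- Concatenation of two paths, parametrized on `[0,1]`. -/
noncomputable def pconcat (f g : ℝ → X) : ℝ → X :=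
  fun t => if t ≤ 1/2 then f (2*t) else g (2*t - 1)

lemma pconcat_cont {f g : ℝ → X} (hf : Continuous f) (hg : Continuous g)
    (h : f 1 = g 0) : Continuous (pconcat f g) := by
  unfold pconcat
  refine Continuous.if_le (hf.comp (by continuity)) (hg.comp (by continuity))
    continuous_id continuous_const ?_
  intro t ht
  subst ht
  norm_num [h]

lemma pconcat_zero (f g : ℝ → X) : pconcat f g 0 = f 0 := by
  norm_num [pconcat]

lemma pconcat_one (f g : ℝ → X) : pconcat f g 1 = g 1 := by
  norm_num [pconcat]

lemma pconcat_mem {f g : ℝ → X} {S : Set X} (hf : ∀ u ∈ Icc (0:ℝ) 1, f u ∈ S)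
    (hg : ∀ u ∈ Icc (0:ℝ) 1, g u ∈ S) : ∀ u ∈ Icc (0:ℝ) 1, pconcat f g u ∈ S := by
  intro u hu
  obtain ⟨h0, h1⟩ := hu
  unfold pconcat
  split_ifs with h
  · exact hf _ ⟨by linarith, by linarith⟩
  · push_neg at h
    exact hg _ ⟨by linarith, by linarith⟩

lemma image_two_mul : (fun t : ℝ => 2*t) '' Icc 0 (1/2) = Icc 0 1 := by
  ext z
  simp only [mem_image, mem_Icc]
  constructor
  · rintro ⟨t, ⟨h1, h2⟩, rfl⟩; constructor <;> linarith
  · rintro ⟨h1, h2⟩; exact ⟨z/2, ⟨by linarith, by linarith⟩, by ring⟩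

lemma image_two_mul_sub : (fun t : ℝ => 2*t - 1) '' Icc (1/2) 1 = Icc 0 1 := by
  ext z
  simp only [mem_image, mem_Icc]
  constructor
  · rintro ⟨t, ⟨h1, h2⟩, rfl⟩; constructor <;> linarith
  · rintro ⟨h1, h2⟩; exact ⟨(z+1)/2, ⟨by linarith, by linarith⟩, by ring⟩

lemma pconcat_evar {f g : ℝ → X} (h : f 1 = g 0) :
    eVariationOn (pconcat f g) (Icc 0 1) =
      eVariationOn f (Icc 0 1) + eVariationOn g (Icc 0 1) := by
  have key := eVariationOn.Icc_add_Icc (pconcat f g) (s := Icc (0:ℝ) 1)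
    (a := 0) (b := 1/2) (c := 1) (by norm_num) (by norm_num)
    (by constructor <;> norm_num)
  have e1 : Icc (0:ℝ) 1 ∩ Icc 0 (1/2) = Icc 0 (1/2) :=
    inter_eq_self_of_subset_right (Icc_subset_Icc le_rfl (by norm_num))
  have e2 : Icc (0:ℝ) 1 ∩ Icc (1/2) 1 = Icc (1/2) 1 :=
    inter_eq_self_of_subset_right (Icc_subset_Icc (by norm_num) le_rfl)
  have e3 : Icc (0:ℝ) 1 ∩ Icc 0 1 = Icc (0:ℝ) 1 := inter_self _
  rw [e1, e2, e3] at key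
  rw [← key]
  congr 1
  · have heq : EqOn (pconcat f g) (f ∘ fun t => 2*t) (Icc 0 (1/2)) := by
      intro t ht
      have h' : t ≤ 1/2 := ht.2
      simp only [pconcat, Function.comp_apply]
      rw [if_pos h']
    rw [eVariationOn.eq_of_eqOn heq,
      eVariationOn.comp_eq_of_monotoneOn f _ (fun a _ b _ hab => by linarith),
      image_two_mul]
  · have heq : EqOn (pconcat f g) (g ∘ fun t => 2*t - 1) (Icc (1/2) 1) := by
      intro t ht
      by_cases h' : t ≤ 1/2
      · have ht2 : t = 1/2 := le_antisymm h' ht.1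
        subst ht2
        simp only [pconcat, Function.comp_apply, if_pos le_rfl]
        norm_num [h]
      · simp only [pconcat, Function.comp_apply]
        rw [if_neg h']
    rw [eVariationOn.eq_of_eqOn heq,
      eVariationOn.comp_eq_of_monotoneOn g _ (fun a _ b _ hab => by linarith),
      image_two_mul_sub]

/-- In a length space, between any two points there are curves of length arbitrarily
close to the distance. -/
lemma exists_curve (hX : IsLengthSpace X) (x y : X) {δ : ℝ≥0∞} (hδ : 0 < δ) :
    ∃ γ : ℝ → X, Continuous γ ∧ γ 0 = x ∧ γ 1 = y ∧
      eVariationOn γ (Icc (0:ℝ) 1) ≤ edist x y + δ := by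
  have h := hX x y
  have hlt : inducedLengthDist (Set.univ : Set X) x y < edist x y + δ := by
    rw [← h]
    exact ENNReal.lt_add_right (edist_ne_top x y) hδ.ne'
  unfold inducedLengthDist at hlt
  obtain ⟨l, ⟨γ, hc, h0, h1, -, hl⟩, hlt'⟩ := sInf_lt_iff.mp hlt
  exact ⟨γ, hc, h0, h1, by rw [← hl]; exact hlt'.le⟩

end Aux

/-- Along a nondecreasing open exhaustion `W_k` of a length space, for a set `A` with
compact closure contained in `W₀`, the intrinsic diameters of `A` measured in `W_k`
satisfy `limsup_k (sup_{x,y ∈ A} d_{W_k}(x,y)) ≤ sup_{x,y ∈ A} edist x y`. -/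
theorem limsup_intrinsic_diam_le
    {X : Type*} [MetricSpace X] (hX : IsLengthSpace X)
    (W : ℕ → Set X) (hW : Monotone W) (hWopen : ∀ k, IsOpen (W k))
    (hWunion : (⋃ k, W k) = Set.univ)
    (A : Set X) (hA : IsCompact (closure A)) (hAW : closure A ⊆ W 0) :
    Filter.limsup (fun k => ⨆ x ∈ A, ⨆ y ∈ A, inducedLengthDist (W k) x y) atTop ≤
      ⨆ x ∈ A, ⨆ y ∈ A, edist x y := by
  set D := ⨆ x ∈ A, ⨆ y ∈ A, edist x y with hDdef
  have hedistD : ∀ x ∈ A, ∀ y ∈ A, edist x y ≤ D := by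
    intro x hx y hy
    calc edist x y ≤ ⨆ y ∈ A, edist x y := le_iSup₂ (f := fun y (_ : y ∈ A) => edist x y) y hy
    _ ≤ D := le_iSup₂ (f := fun x (_ : x ∈ A) => ⨆ y ∈ A, edist x y) x hx
  refine ENNReal.le_of_forall_pos_le_add fun ε hε _ => ?_
  -- a thickening of `closure A` inside `W 0`
  obtain ⟨r, hr, hrsub⟩ := hA.exists_thickening_subset_open (hWopen 0) hAW
  set ρ : ℝ≥0∞ := ENNReal.ofReal r with hρdef
  have hρpos : 0 < ρ := ENNReal.ofReal_pos.mpr hr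
  have hρtop : ρ ≠ ⊤ := ENNReal.ofReal_ne_top
  set δ : ℝ≥0∞ := min ((ε : ℝ≥0∞)/5) (ρ/3) with hδdef
  have hδpos : 0 < δ := by
    apply lt_min
    · exact ENNReal.div_pos (by exact_mod_cast hε.ne') (by norm_num)
    · exact ENNReal.div_pos hρpos.ne' (by norm_num)
  have h2δ : 2 * δ < ρ := by
    have h1 : 2 * δ ≤ 2 * (ρ/3) := mul_le_mul_right (min_le_right _ _) 2
    have h2 : 2 * (ρ/3) < 3 * (ρ/3) := by
      exact ENNReal.mul_lt_mul_left
        (by simp [ENNReal.div_eq_zero_iff, hρpos.ne', hρtop]) ((ENNReal.div_lt_top hρtop (by norm_num)).ne)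
        (by norm_num)
    have h3 : 3 * (ρ/3) = ρ := by
      rw [mul_comm]
      exact ENNReal.div_mul_cancel (by norm_num) (by norm_num)
    calc 2 * δ ≤ 2 * (ρ/3) := h1
    _ < 3 * (ρ/3) := h2
    _ = ρ := h3
  have h5δ : 5 * δ ≤ (ε : ℝ≥0∞) := by
    have : 5 * δ ≤ 5 * ((ε : ℝ≥0∞)/5) := mul_le_mul_right (min_le_left _ _) 5
    rwa [ENNReal.mul_div_cancel (by norm_num) (by norm_num)] at this
  -- a finite δ-net of A
  obtain ⟨t, htA, htfin, htcov⟩ := EMetric.totallyBounded_iff'.mp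
    (hA.totallyBounded.subset subset_closure) δ hδpos
  -- curves between arbitrary points, with slack δ
  choose γ hγc hγ0 hγ1 hγlen using fun p q : X => exists_curve hX p q hδpos
  -- the union of the images of curves between net points is compact
  set K : Set X := ⋃ p ∈ t, ⋃ q ∈ t, γ p q '' Icc (0:ℝ) 1 with hKdef
  have hKcomp : IsCompact K := by
    apply htfin.isCompact_biUnion
    intro p _
    apply htfin.isCompact_biUnion
    intro q _
    exact isCompact_Icc.image (hγc p q)
  obtain ⟨s, hs⟩ := hKcomp.elim_finite_subcover W hWopen
    (by rw [hWunion]; exact subset_univ _)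
  set m : ℕ := s.sup id with hmdef
  have hKW : K ⊆ W m := by
    intro z hz
    obtain ⟨i, hi, hzi⟩ := mem_iUnion₂.mp (hs hz)
    exact hW (Finset.le_sup (f := id) hi) hzi
  -- the eventual bound
  refine Filter.limsup_le_of_le (by isBoundedDefault) ?_
  filter_upwards [eventually_ge_atTop m] with k hk
  refine iSup₂_le fun x hx => iSup₂_le fun y hy => ?_
  -- pick net points near x and y
  obtain ⟨p, hp, hxp⟩ := mem_iUnion₂.mp (htcov hx)
  obtain ⟨q, hq, hyq⟩ := mem_iUnion₂.mp (htcov hy)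
  rw [EMetric.mem_ball] at hxp hyq
  have hpA : p ∈ A := htA hp
  have hqA : q ∈ A := htA hq
  -- the three curves
  have hlen1 : eVariationOn (γ x p) (Icc (0:ℝ) 1) ≤ 2 * δ := by
    calc eVariationOn (γ x p) (Icc (0:ℝ) 1) ≤ edist x p + δ := hγlen x p
    _ ≤ δ + δ := add_le_add hxp.le le_rfl
    _ = 2 * δ := (two_mul δ).symm
  have hlen2 : eVariationOn (γ p q) (Icc (0:ℝ) 1) ≤ D + δ :=
    (hγlen p q).trans (add_le_add (hedistD p hpA q hqA) le_rfl)
  have hlen3 : eVariationOn (γ q y) (Icc (0:ℝ) 1) ≤ 2 * δ := by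
    calc eVariationOn (γ q y) (Icc (0:ℝ) 1) ≤ edist q y + δ := hγlen q y
    _ ≤ δ + δ := add_le_add (by rw [edist_comm]; exact hyq.le) le_rfl
    _ = 2 * δ := (two_mul δ).symm
  -- small curves near A stay in W 0
  have hsmall : ∀ a b : X, a ∈ A → eVariationOn (γ a b) (Icc (0:ℝ) 1) ≤ 2 * δ →
      ∀ u ∈ Icc (0:ℝ) 1, γ a b u ∈ W k := by
    intro a b ha hlen u hu
    have h01 : (0:ℝ) ∈ Icc (0:ℝ) 1 := by constructor <;> norm_num
    have hd : edist (γ a b u) a ≤ 2 * δ := by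
      calc edist (γ a b u) a = edist (γ a b u) (γ a b 0) := by rw [hγ0]
      _ ≤ eVariationOn (γ a b) (Icc (0:ℝ) 1) := eVariationOn.edist_le _ hu h01
      _ ≤ 2 * δ := hlen
    have : γ a b u ∈ Metric.thickening r (closure A) := by
      rw [Metric.mem_thickening_iff_infEdist_lt]
      calc EMetric.infEdist (γ a b u) (closure A) ≤ edist (γ a b u) a :=
        EMetric.infEdist_le_edist_of_mem (subset_closure ha)
      _ ≤ 2 * δ := hd
      _ < ρ := h2δ
    exact hW (Nat.zero_le k) (hrsub this)
  have hmid : ∀ u ∈ Icc (0:ℝ) 1, γ p q u ∈ W k := by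
    intro u hu
    apply hW hk
    apply hKW
    rw [hKdef]
    exact mem_iUnion₂.mpr ⟨p, hp, mem_iUnion₂.mpr ⟨q, hq, mem_image_of_mem _ hu⟩⟩
  -- the concatenated curve
  set Γ : ℝ → X := pconcat (γ x p) (pconcat (γ p q) (γ q y)) with hΓdef
  have hmatch1 : γ p q 1 = γ q y 0 := by rw [hγ1, hγ0]
  have hmatch0 : γ x p 1 = pconcat (γ p q) (γ q y) 0 := by
    rw [pconcat_zero, hγ1, hγ0]
  have hΓc : Continuous Γ :=
    pconcat_cont (hγc x p) (pconcat_cont (hγc p q) (hγc q y) hmatch1) hmatch0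
  have hΓ0 : Γ 0 = x := by rw [hΓdef, pconcat_zero, hγ0]
  have hΓ1 : Γ 1 = y := by rw [hΓdef, pconcat_one, pconcat_one, hγ1]
  have hΓmem : ∀ u ∈ Icc (0:ℝ) 1, Γ u ∈ W k :=
    pconcat_mem (hsmall x p hx hlen1)
      (pconcat_mem hmid (hsmall q y hqA hlen3))
  have hΓlen : eVariationOn Γ (Icc (0:ℝ) 1) ≤ D + ε := by
    rw [hΓdef, pconcat_evar hmatch0, pconcat_evar hmatch1]
    calc eVariationOn (γ x p) (Icc (0:ℝ) 1) +
        (eVariationOn (γ p q) (Icc (0:ℝ) 1) + eVariationOn (γ q y) (Icc (0:ℝ) 1))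
        ≤ 2 * δ + ((D + δ) + 2 * δ) := add_le_add hlen1 (add_le_add hlen2 hlen3)
      _ = D + 5 * δ := by ring
      _ ≤ D + ε := add_le_add le_rfl h5δ
  calc inducedLengthDist (W k) x y ≤ eVariationOn Γ (Icc (0:ℝ) 1) :=
    sInf_le ⟨Γ, hΓc, hΓ0, hΓ1, hΓmem, rfl⟩
  _ ≤ D + ε := hΓlen
end

section
/- Let X be a length space, let W ⊆ X, let η ∈ (0,∞], and let x ∈ X be such that every point z with edist(x,z) < η lies in W. Then for every y with edist(x,y) < η, the induced length distance satisfies d_W(x,y) = edist(x,y). -/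
open Set Filter ENNReal

/-- Locality of induced length distances in a length space: if every point within
extended distance `η` of `x` belongs to `W`, then for every `y` with `edist x y < η`
the induced length distance of `W` from `x` to `y` equals the ambient distance. -/
theorem inducedLengthDist_eq_edist_of_ball_subset
    {X : Type*} [MetricSpace X] (hX : IsLengthSpace X)
    (W : Set X) (η : ℝ≥0∞) (hη : 0 < η) (x : X)
    (hball : ∀ z : X, edist x z < η → z ∈ W)
    (y : X) (hy : edist x y < η) :
    inducedLengthDist W x y = edist x y := by
  apply le_antisymm
  · -- upper bound: ≤ edist x y
    refine le_of_forall_gt ?_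
    intro c hc
    -- pick b with edist x y < b ≤ min c η
    set b : ℝ≥0∞ := min c η with hb
    have hxb : edist x y < b := lt_min hc hy
    have hS : edist x y = inducedLengthDist (Set.univ : Set X) x y := hX x y
    have : sInf {l : ℝ≥0∞ | ∃ γ : ℝ → X, Continuous γ ∧ γ 0 = x ∧ γ 1 = y ∧
        (∀ u ∈ Icc (0:ℝ) 1, γ u ∈ (Set.univ : Set X)) ∧
        l = eVariationOn γ (Icc (0:ℝ) 1)} < b := by
      rw [inducedLengthDist] at hS; rw [← hS]; exact hxb
    obtain ⟨l, hl, hlb⟩ := sInf_lt_iff.mp this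
    obtain ⟨γ, hγc, hγ0, hγ1, -, hlen⟩ := hl
    have hlη : l < η := lt_of_lt_of_le hlb (min_le_right _ _)
    have hmem : ∀ u ∈ Icc (0:ℝ) 1, γ u ∈ W := by
      intro u hu
      apply hball
      have h0 : (0:ℝ) ∈ Icc (0:ℝ) 1 := ⟨le_refl _, zero_le_one⟩
      have := eVariationOn.edist_le γ h0 hu
      rw [hγ0] at this
      calc edist x (γ u) ≤ eVariationOn γ (Icc (0:ℝ) 1) := this
        _ = l := hlen.symm
        _ < η := hlη
    have hW : l ∈ {l : ℝ≥0∞ | ∃ γ : ℝ → X, Continuous γ ∧ γ 0 = x ∧ γ 1 = y ∧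
        (∀ u ∈ Icc (0:ℝ) 1, γ u ∈ W) ∧ l = eVariationOn γ (Icc (0:ℝ) 1)} :=
      ⟨γ, hγc, hγ0, hγ1, hmem, hlen⟩
    calc inducedLengthDist W x y ≤ l := sInf_le hW
      _ < b := hlb
      _ ≤ c := min_le_left _ _
  · -- lower bound
    apply le_sInf
    rintro l ⟨γ, hγc, hγ0, hγ1, -, hlen⟩
    have h0 : (0:ℝ) ∈ Icc (0:ℝ) 1 := ⟨le_refl _, zero_le_one⟩
    have h1 : (1:ℝ) ∈ Icc (0:ℝ) 1 := ⟨zero_le_one, le_refl _⟩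
    have := eVariationOn.edist_le γ h0 h1
    rw [hγ0, hγ1] at this
    rw [hlen]; exact this
end

section
/- Let L > 0. There is no isometric embedding of the circle of circumference L, i.e. AddCircle L = ℝ/Lℤ equipped with its quotient (arc-length) metric, into the Euclidean plane EuclideanSpace ℝ (Fin 2): no map f : AddCircle L → EuclideanSpace ℝ (Fin 2) satisfies dist(f(x), f(y)) = dist(x, y) for all x, y. -/
set_option maxHeartbeats 1000000

lemma addCircle_norm_neg (L a : ℝ) :
    ‖((-a : ℝ) : AddCircle L)‖ = ‖((a : ℝ) : AddCircle L)‖ := by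
  have h : ((-a : ℝ) : AddCircle L) = -((a : ℝ) : AddCircle L) := rfl
  rw [h, norm_neg]

lemma addCircle_dist_coe (L : ℝ) (a b : ℝ) :
    dist ((a : AddCircle L)) (b : AddCircle L) = ‖((a - b : ℝ) : AddCircle L)‖ := by
  rw [dist_eq_norm]
  norm_cast

/-- The circle `ℝ/Lℤ` of circumference `L > 0`, equipped with its quotient (arc-length)
metric, admits no isometric (distance-preserving) embedding into the Euclidean plane. -/
theorem no_isometric_embedding_circle_into_plane (L : ℝ) (hL : 0 < L) :
    ¬ ∃ f : AddCircle L → EuclideanSpace ℝ (Fin 2),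
        ∀ x y : AddCircle L, dist (f x) (f y) = dist x y := by
  rintro ⟨f, hf⟩
  have hq : ‖((L/4 : ℝ) : AddCircle L)‖ = L/4 := by
    rw [AddCircle.norm_eq]
    have : round (L⁻¹ * (L/4)) = 0 := by
      rw [inv_mul_eq_div, div_div_cancel_left' hL.ne']
      norm_num [round_eq]
    rw [this]
    simp [abs_of_nonneg, hL.le]
    positivity
  have hh : ‖((L/2 : ℝ) : AddCircle L)‖ = L/2 := by
    rw [AddCircle.norm_eq]
    have : round (L⁻¹ * (L/2)) = 1 := by
      rw [inv_mul_eq_div, div_div_cancel_left' hL.ne']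
      norm_num [round_eq]
    rw [this]
    rw [abs_of_nonpos (by linarith)]
    ring
  have hq' : ‖((-(L/4) : ℝ) : AddCircle L)‖ = L/4 := by
    rw [addCircle_norm_neg]; exact hq
  have hh' : ‖((-(L/2) : ℝ) : AddCircle L)‖ = L/2 := by
    rw [addCircle_norm_neg]; exact hh
  -- points
  set x0 : AddCircle L := ((0:ℝ) : AddCircle L)
  set x1 : AddCircle L := ((L/4 : ℝ) : AddCircle L)
  set x2 : AddCircle L := ((L/2 : ℝ) : AddCircle L)
  set x3 : AddCircle L := ((3*L/4 : ℝ) : AddCircle L)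
  have d01 : dist x0 x1 = L/4 := by
    rw [addCircle_dist_coe]
    have : (0:ℝ) - L/4 = -(L/4) := by ring
    rw [this, hq']
  have d12 : dist x1 x2 = L/4 := by
    rw [addCircle_dist_coe]
    have : L/4 - L/2 = -(L/4) := by ring
    rw [this, hq']
  have d02 : dist x0 x2 = L/2 := by
    rw [addCircle_dist_coe]
    have : (0:ℝ) - L/2 = -(L/2) := by ring
    rw [this, hh']
  have d03 : dist x0 x3 = L/4 := by
    rw [addCircle_dist_coe]
    have h1 : (0:ℝ) - 3*L/4 = (L/4) - L := by ring
    rw [h1]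
    have h2 : (((L/4 - L : ℝ)) : AddCircle L) = ((L/4 : ℝ) : AddCircle L) := by
      have h3 : (((L/4 - L : ℝ)) : AddCircle L)
          = ((L/4 : ℝ) : AddCircle L) - ((L : ℝ) : AddCircle L) := rfl
      rw [h3, AddCircle.coe_period, sub_zero]
    rw [h2, hq]
  have d23 : dist x2 x3 = L/4 := by
    rw [addCircle_dist_coe]
    have : L/2 - 3*L/4 = -(L/4) := by ring
    rw [this, hq']
  have d13 : dist x1 x3 = L/2 := by
    rw [addCircle_dist_coe]
    have : L/4 - 3*L/4 = -(L/2) := by ring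
    rw [this, hh']
  have m1 : f x1 = midpoint ℝ (f x0) (f x2) := by
    apply eq_midpoint_of_dist_eq_half
    · rw [hf, hf, d01, d02]; ring
    · rw [hf, hf, d12, d02]; ring
  have m3 : f x3 = midpoint ℝ (f x0) (f x2) := by
    apply eq_midpoint_of_dist_eq_half
    · rw [hf, hf, d03, d02]; ring
    · rw [dist_comm, hf, hf, d23, d02]; ring
  have : dist (f x1) (f x3) = 0 := by rw [m1, m3, dist_self]
  rw [hf, d13] at this
  linarith
end
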